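/- arXiv:1809.02007 — 8 statements merged into one kernel-verified Lean document; each statement's English description precedes it below -/
import Mathlib

section
/- Let Q(x) = inf{f(y,x) : y ∈ Y, Ay + Bx = b, g(y,x) ≤ 0}, where f is jointly convex and differentiable, each component of g is jointly convex and differentiable, Y is nonempty closed convex, and a Slater condition holds for every x ∈ X (existence of y_x ∈ ri(Y) with By_x feasible and g(y_x,x) < 0). Let ŷ be an ε-optimal feasible primal solution and (λ̂, μ̂) an ε-optimal feasible dual solution for the problem at x̄, and let η = max_{y ∈ Y} ⟨∇_y L_{x̄}(ŷ, λ̂, μ̂), ŷ − y⟩ be finite, where L_x(y,λ,μ) = f(y,x) + λ^T(Bx + Ay − b) + μ^T g(y,x). Then the affine function C(x) = L_{x̄}(ŷ, λ̂, μ̂) − η + ⟨∇_x L_{x̄}(ŷ, λ̂, μ̂), x − x̄⟩ satisfies C(x) ≤ Q(x) for all x ∈ X, and Q(x̄) − C(x̄) ≤ ε + η. -/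
/-! The Lagrangian is jointly convex in `(y, x)`, hence lies above its linearization at
`(ŷ, x̄)`. At a point `y` feasible for `x` the Lagrangian is at most `f y x`, and the `y`-part of
the linearization is at least `-η`, so the cut `C` is below every such `f y x`, i.e. below `Q x`.
The gap bound is `L_x̄(ŷ, λ̂, μ̂) ≥ Q x̄ - ε`, the dual ε-optimality evaluated at `ŷ`. -/

open Matrix

/-- Lagrangian L_x(y, λ, μ) = f(y,x) + λᵀ(Bx + Ay − b) + μᵀ g(y,x). -/
noncomputable def stmt1Lagr {n m q p : ℕ}
    (A : Matrix (Fin q) (Fin n) ℝ) (B : Matrix (Fin q) (Fin m) ℝ) (b : Fin q → ℝ)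
    (f : (Fin n → ℝ) → (Fin m → ℝ) → ℝ)
    (g : (Fin n → ℝ) → (Fin m → ℝ) → Fin p → ℝ)
    (lam : Fin q → ℝ) (mu : Fin p → ℝ)
    (y : Fin n → ℝ) (x : Fin m → ℝ) : ℝ :=
  f y x + lam ⬝ᵥ (B *ᵥ x + A *ᵥ y - b) + mu ⬝ᵥ g y x

open Set

theorem ConvexOn.fun_sum {𝕜 E β ι : Type*} [Semiring 𝕜] [PartialOrder 𝕜] [AddCommMonoid E]
    [AddCommMonoid β] [PartialOrder β] [IsOrderedAddMonoid β] [SMul 𝕜 E] [Module 𝕜 β]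
    {s : Set E} (hs : Convex 𝕜 s) {t : Finset ι} {f : ι → E → β}
    (hf : ∀ i ∈ t, ConvexOn 𝕜 s (f i)) :
    ConvexOn 𝕜 s (fun x => ∑ i ∈ t, f i x) := by
  classical
  induction t using Finset.induction_on with
  | empty => simpa using convexOn_const (0 : β) hs
  | insert a t hat ih =>
    simp only [Finset.sum_insert hat]
    exact (hf a (Finset.mem_insert_self a t)).add
      (ih fun i hi => hf i (Finset.mem_insert_of_mem hi))

theorem ConvexOn.add_fderiv_sub_le {E : Type*} [NormedAddCommGroup E] [NormedSpace ℝ E]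
    {s : Set E} {F : E → ℝ} {F' : E →L[ℝ] ℝ} {z w : E} (hF : ConvexOn ℝ s F)
    (hz : z ∈ s) (hw : w ∈ s) (hd : HasFDerivAt F F' z) :
    F z + F' (w - z) ≤ F w := by
  have hline : ConvexOn ℝ (AffineMap.lineMap (k := ℝ) z w ⁻¹' s)
      (F ∘ AffineMap.lineMap (k := ℝ) z w) :=
    hF.comp_affineMap _
  have hderiv : HasDerivAt (F ∘ AffineMap.lineMap (k := ℝ) z w) (F' (w - z)) 0 := by
    refine HasFDerivAt.comp_hasDerivAt (0 : ℝ) ?_ AffineMap.hasDerivAt_lineMap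
    simpa using hd
  have := hline.le_slope_of_hasDerivAt (x := 0) (y := 1) (by simpa using hz) (by simpa using hw)
    zero_lt_one hderiv
  simp only [slope_def_field, Function.comp_apply, AffineMap.lineMap_apply_one,
    AffineMap.lineMap_apply_zero, sub_zero, div_one] at this
  linarith

theorem ConvexOn.sub_fderiv_add_fderiv_le {E F : Type*} [NormedAddCommGroup E] [NormedSpace ℝ E]
    [NormedAddCommGroup F] [NormedSpace ℝ F] {G : E → F → ℝ}
    (hG : ConvexOn ℝ univ (Function.uncurry G)) {y₀ : E} {x₀ : F}
    (hd : DifferentiableAt ℝ (Function.uncurry G) (y₀, x₀)) (y : E) (x : F) :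
    G y₀ x₀ - fderiv ℝ (fun y' => G y' x₀) y₀ (y₀ - y) + fderiv ℝ (fun x' => G y₀ x') x₀ (x - x₀)
      ≤ G y x := by
  set G' := fderiv ℝ (Function.uncurry G) (y₀, x₀)
  have hG' : HasFDerivAt (Function.uncurry G) G' (y₀, x₀) := hd.hasFDerivAt
  have hy : HasFDerivAt (fun y' => G y' x₀) (G'.comp (.inl ℝ E F)) y₀ :=
    hG'.comp (f := fun y' => (y', x₀)) y₀ (hasFDerivAt_prodMk_left y₀ x₀)
  have hx : HasFDerivAt (fun x' => G y₀ x') (G'.comp (.inr ℝ E F)) x₀ :=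
    hG'.comp (f := fun x' => (y₀, x')) x₀ (hasFDerivAt_prodMk_right y₀ x₀)
  have hsplit : (y, x) - (y₀, x₀) = -(y₀ - y, 0) + (0, x - x₀) := by simp
  have := hG.add_fderiv_sub_le (mem_univ _) (mem_univ (y, x)) hG'
  rw [hsplit, map_add, map_neg] at this
  simpa [hy.fderiv, hx.fderiv, sub_eq_add_neg, add_assoc] using this

section Lagrangian

variable {n m q p : ℕ} (A : Matrix (Fin q) (Fin n) ℝ) (B : Matrix (Fin q) (Fin m) ℝ)
  (b : Fin q → ℝ) {f : (Fin n → ℝ) → (Fin m → ℝ) → ℝ} {g : (Fin n → ℝ) → (Fin m → ℝ) → Fin p → ℝ}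
  (lam : Fin q → ℝ) {mu : Fin p → ℝ}

theorem convexOn_uncurry_stmt1Lagr (hf : ConvexOn ℝ univ (Function.uncurry f))
    (hg : ∀ i, ConvexOn ℝ univ (fun z : (Fin n → ℝ) × (Fin m → ℝ) => g z.1 z.2 i))
    (hmu : 0 ≤ mu) : ConvexOn ℝ univ (Function.uncurry (stmt1Lagr A B b f g lam mu)) := by
  have hlin : ConvexOn ℝ univ
      (fun z : (Fin n → ℝ) × (Fin m → ℝ) => lam ⬝ᵥ (B *ᵥ z.2 + A *ᵥ z.1 - b)) := by
    refine ⟨convex_univ, fun u _ v _ a c _ _ hac => le_of_eq ?_⟩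
    simp only [Prod.smul_snd, Prod.smul_fst, Prod.fst_add, Prod.snd_add, mulVec_add,
      mulVec_smul, dotProduct_sub, dotProduct_add, dotProduct_smul, smul_eq_mul]
    linear_combination (lam ⬝ᵥ b) * hac
  have hmul : ConvexOn ℝ univ
      (fun z : (Fin n → ℝ) × (Fin m → ℝ) => ∑ i, mu i • g z.1 z.2 i) :=
    ConvexOn.fun_sum convex_univ fun i _ => (hg i).smul (hmu i)
  exact (hf.add hlin).add hmul

theorem differentiable_uncurry_stmt1Lagr (hf : Differentiable ℝ (Function.uncurry f))
    (hg : ∀ i, Differentiable ℝ (fun z : (Fin n → ℝ) × (Fin m → ℝ) => g z.1 z.2 i)) :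
    Differentiable ℝ (Function.uncurry (stmt1Lagr A B b f g lam mu)) := by
  unfold stmt1Lagr Function.uncurry
  simp only [dotProduct, mulVec, Pi.add_apply, Pi.sub_apply]
  fun_prop

theorem stmt1Lagr_le_of_feasible (hmu : 0 ≤ mu) {y : Fin n → ℝ} {x : Fin m → ℝ}
    (hAB : A *ᵥ y + B *ᵥ x = b) (hg : ∀ i, g y x i ≤ 0) :
    stmt1Lagr A B b f g lam mu y x ≤ f y x := by
  have hmg : mu ⬝ᵥ g y x ≤ 0 :=
    Finset.sum_nonpos fun i _ => mul_nonpos_of_nonneg_of_nonpos (hmu i) (hg i)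
  rw [stmt1Lagr, add_comm (B *ᵥ x), hAB, sub_self, dotProduct_zero, add_zero]
  linarith

end Lagrangian

theorem stmt_1_general {n m q p : ℕ}
    (X : Set (Fin m → ℝ))
    (Y : Set (Fin n → ℝ))
    (A : Matrix (Fin q) (Fin n) ℝ) (B : Matrix (Fin q) (Fin m) ℝ) (b : Fin q → ℝ)
    (f : (Fin n → ℝ) → (Fin m → ℝ) → ℝ)
    (g : (Fin n → ℝ) → (Fin m → ℝ) → Fin p → ℝ)
    (hfconv : ConvexOn ℝ Set.univ (fun z : (Fin n → ℝ) × (Fin m → ℝ) => f z.1 z.2))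
    (hgconv : ∀ i, ConvexOn ℝ Set.univ (fun z : (Fin n → ℝ) × (Fin m → ℝ) => g z.1 z.2 i))
    (hfdiff : Differentiable ℝ (fun z : (Fin n → ℝ) × (Fin m → ℝ) => f z.1 z.2))
    (hgdiff : ∀ i, Differentiable ℝ (fun z : (Fin n → ℝ) × (Fin m → ℝ) => g z.1 z.2 i))
    -- Q x is the (finite) optimal value of the primal problem at x:
    (Q : (Fin m → ℝ) → ℝ)
    (hQ : ∀ x ∈ X, IsGLB {v : ℝ | ∃ y ∈ Y,
      A *ᵥ y + B *ᵥ x = b ∧ (∀ i, g y x i ≤ 0) ∧ v = f y x} (Q x))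
    (xbar : Fin m → ℝ)
    (ε : ℝ)
    -- ε-optimal feasible primal solution ŷ at x̄:
    (yhat : Fin n → ℝ) (hyhatY : yhat ∈ Y)
    -- ε-optimal feasible dual solution (λ̂, μ̂) at x̄ (by strong duality the
    -- dual optimal value equals Q x̄, so θ_x̄(λ̂, μ̂) ≥ Q x̄ − ε):
    (lam : Fin q → ℝ) (mu : Fin p → ℝ) (hmu : 0 ≤ mu)
    (hdualopt : ∀ y ∈ Y, stmt1Lagr A B b f g lam mu y xbar ≥ Q xbar - ε)
    -- η = ℓ(ŷ, x̄, λ̂, μ̂) = max_{y ∈ Y} ⟨∇_y L_x̄(ŷ, λ̂, μ̂), ŷ − y⟩ is finite: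
    (η : ℝ)
    (hη : IsLUB {v : ℝ | ∃ y ∈ Y,
      v = fderiv ℝ (fun y' => stmt1Lagr A B b f g lam mu y' xbar) yhat (yhat - y)} η) :
    (∀ x ∈ X,
      stmt1Lagr A B b f g lam mu yhat xbar - η +
        fderiv ℝ (fun x' => stmt1Lagr A B b f g lam mu yhat x') xbar (x - xbar) ≤ Q x) ∧
    Q xbar - (stmt1Lagr A B b f g lam mu yhat xbar - η) ≤ ε + η := by
  have hL := convexOn_uncurry_stmt1Lagr A B b lam hfconv hgconv hmu
  have hLdiff := differentiable_uncurry_stmt1Lagr A B b lam (mu := mu) hfdiff hgdiff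
  refine ⟨fun x hx => (hQ x hx).2 ?_, by linarith [hdualopt yhat hyhatY]⟩
  rintro _ ⟨y, hyY, hAB, hg, rfl⟩
  calc _ ≤ stmt1Lagr A B b f g lam mu yhat xbar
          - fderiv ℝ (fun y' => stmt1Lagr A B b f g lam mu y' xbar) yhat (yhat - y)
          + fderiv ℝ (fun x' => stmt1Lagr A B b f g lam mu yhat x') xbar (x - xbar) := by
        linarith [hη.1 ⟨y, hyY, rfl⟩]
    _ ≤ stmt1Lagr A B b f g lam mu y x := hL.sub_fderiv_add_fderiv_le (hLdiff _) y x
    _ ≤ f y x := stmt1Lagr_le_of_feasible A B b lam hmu hAB hg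

/-- Inexact cut for the value function of a convex nonlinear program
(Proposition 2.2). -/
theorem stmt_1 {n m q p : ℕ}
    (X : Set (Fin m → ℝ)) (hXne : X.Nonempty) (hXcomp : IsCompact X) (hXconv : Convex ℝ X)
    (Y : Set (Fin n → ℝ)) (hYne : Y.Nonempty) (hYcl : IsClosed Y) (hYconv : Convex ℝ Y)
    (A : Matrix (Fin q) (Fin n) ℝ) (B : Matrix (Fin q) (Fin m) ℝ) (b : Fin q → ℝ)
    (f : (Fin n → ℝ) → (Fin m → ℝ) → ℝ)
    (g : (Fin n → ℝ) → (Fin m → ℝ) → Fin p → ℝ)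
    (hfconv : ConvexOn ℝ Set.univ (fun z : (Fin n → ℝ) × (Fin m → ℝ) => f z.1 z.2))
    (hgconv : ∀ i, ConvexOn ℝ Set.univ (fun z : (Fin n → ℝ) × (Fin m → ℝ) => g z.1 z.2 i))
    (hfdiff : Differentiable ℝ (fun z : (Fin n → ℝ) × (Fin m → ℝ) => f z.1 z.2))
    (hgdiff : ∀ i, Differentiable ℝ (fun z : (Fin n → ℝ) × (Fin m → ℝ) => g z.1 z.2 i))
    -- Slater condition at every x ∈ X:
    (hslater : ∀ x ∈ X, ∃ y ∈ intrinsicInterior ℝ Y,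
      A *ᵥ y + B *ᵥ x = b ∧ ∀ i, g y x i < 0)
    -- Q x is the (finite) optimal value of the primal problem at x:
    (Q : (Fin m → ℝ) → ℝ)
    (hQ : ∀ x ∈ X, IsGLB {v : ℝ | ∃ y ∈ Y,
      A *ᵥ y + B *ᵥ x = b ∧ (∀ i, g y x i ≤ 0) ∧ v = f y x} (Q x))
    (xbar : Fin m → ℝ) (hxbar : xbar ∈ X)
    (ε : ℝ) (hε : 0 ≤ ε)
    -- ε-optimal feasible primal solution ŷ at x̄:
    (yhat : Fin n → ℝ) (hyhatY : yhat ∈ Y)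
    (hyhatfeas : A *ᵥ yhat + B *ᵥ xbar = b ∧ ∀ i, g yhat xbar i ≤ 0)
    (hyhatopt : f yhat xbar ≤ Q xbar + ε)
    -- ε-optimal feasible dual solution (λ̂, μ̂) at x̄ (by strong duality the
    -- dual optimal value equals Q x̄, so θ_x̄(λ̂, μ̂) ≥ Q x̄ − ε):
    (lam : Fin q → ℝ) (mu : Fin p → ℝ) (hmu : 0 ≤ mu)
    (hdualopt : ∀ y ∈ Y, stmt1Lagr A B b f g lam mu y xbar ≥ Q xbar - ε)
    -- η = ℓ(ŷ, x̄, λ̂, μ̂) = max_{y ∈ Y} ⟨∇_y L_x̄(ŷ, λ̂, μ̂), ŷ − y⟩ is finite: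
    (η : ℝ)
    (hη : IsLUB {v : ℝ | ∃ y ∈ Y,
      v = fderiv ℝ (fun y' => stmt1Lagr A B b f g lam mu y' xbar) yhat (yhat - y)} η) :
    (∀ x ∈ X,
      stmt1Lagr A B b f g lam mu yhat xbar - η +
        fderiv ℝ (fun x' => stmt1Lagr A B b f g lam mu yhat x') xbar (x - xbar) ≤ Q x) ∧
    Q xbar - (stmt1Lagr A B b f g lam mu yhat xbar - η) ≤ ε + η :=
  stmt_1_general X Y A B b f g hfconv hgconv hfdiff hgdiff Q hQ xbar ε yhat hyhatY lam mu hmu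
    hdualopt η hη
end

section
/- Under the setting of the inexact-cut proposition for a convex nonlinear value function, assume additionally that Y is compact with diameter D(Y), that ∇_y f(·,x) is M₁-Lipschitz on Y uniformly in x ∈ X, and that each ∇_y g_i(·,x) is M₂-Lipschitz on Y uniformly in x ∈ X. Let L̄ be any lower bound on Q(x̄), let U = (f(y_{x̄}, x̄) − L̄ + ε)/min_i(−g_i(y_{x̄}, x̄)) and M₃ = M₁ + U·M₂, and write ℓ = max_{y ∈ Y} ⟨∇_y L_{x̄}(ŷ, λ̂, μ̂), ŷ − y⟩. Then Q(x̄) − C(x̄) ≤ ε + ℓ − ℓ²/(2 M₃ D(Y)²) when ℓ ≤ M₃ D(Y)², and Q(x̄) − C(x̄) ≤ ε + ℓ/2 otherwise. -/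
open Matrix
open scoped RealInnerProductSpace

noncomputable def stmt2Lagr {n m q p : ℕ}
    (A : Matrix (Fin q) (Fin n) ℝ) (B : Matrix (Fin q) (Fin m) ℝ) (b : Fin q → ℝ)
    (f : EuclideanSpace ℝ (Fin n) → EuclideanSpace ℝ (Fin m) → ℝ)
    (g : EuclideanSpace ℝ (Fin n) → EuclideanSpace ℝ (Fin m) → Fin p → ℝ)
    (lam : Fin q → ℝ) (mu : Fin p → ℝ)
    (y : EuclideanSpace ℝ (Fin n)) (x : EuclideanSpace ℝ (Fin m)) : ℝ :=
  f y x + lam ⬝ᵥ ((B *ᵥ x + A *ᵥ y - b : Fin q → ℝ)) + mu ⬝ᵥ g y x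

/-!
The Slater point `y_x̄` bounds the mass of the multipliers: `ε`-optimality of the dual gives
`Q x̄ - ε ≤ L(y_x̄) ≤ f(y_x̄, x̄) - (∑ μ̂ᵢ) · minᵢ (-gᵢ(y_x̄, x̄))`, hence `∑ μ̂ᵢ ≤ U`, and so
`∇_y L_x̄(·, λ̂, μ̂)` is `M₃`-Lipschitz on `Y`. Let `y*` attain the maximum `ℓ`. On the segment
`ŷ + t (y* - ŷ)`, `t ∈ [0, 1]`, the descent lemma together with `L ≥ Q x̄ - ε` on `Y` gives
`Q x̄ - ε ≤ L(ŷ) - t ℓ + M₃ D(Y)² t² / 2`; taking `t = ℓ / (M₃ D(Y)²)` or `t = 1` gives the bound.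
-/

open Set Finset

theorem le_ite_of_forall_le_quadratic {a ℓ M : ℝ} (hℓ : 0 ≤ ℓ)
    (h : ∀ t ∈ Icc (0 : ℝ) 1, a ≤ -(t * ℓ) + M / 2 * t ^ 2) :
    a ≤ if ℓ ≤ M then -(ℓ ^ 2 / (2 * M)) else -(ℓ / 2) := by
  split_ifs with hℓM
  · rcases (hℓ.trans hℓM).eq_or_lt with hM | hM
    · have hℓ0 : ℓ = 0 := le_antisymm (hM ▸ hℓM) hℓ
      simpa [hℓ0] using h 0 (left_mem_Icc.2 zero_le_one)
    · have ht : ℓ / M ∈ Icc (0 : ℝ) 1 := ⟨div_nonneg hℓ hM.le, (div_le_one hM).2 hℓM⟩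
      convert h _ ht using 1
      field_simp
      ring
  · have := h 1 (right_mem_Icc.2 zero_le_one)
    linarith

theorem Convex.image_le_add_fderiv_add_half_mul_sq {E : Type*} [NormedAddCommGroup E]
    [NormedSpace ℝ E] {f : E → ℝ} {s : Set E} {M : ℝ} (hs : Convex ℝ s)
    (hf : ∀ x ∈ s, DifferentiableAt ℝ f x)
    (hlip : ∀ x ∈ s, ∀ y ∈ s, ‖fderiv ℝ f y - fderiv ℝ f x‖ ≤ M * ‖y - x‖)
    {x y : E} (hx : x ∈ s) (hy : y ∈ s) :
    f y ≤ f x + fderiv ℝ f x (y - x) + M / 2 * ‖y - x‖ ^ 2 := by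
  set d := y - x with hd
  have hseg : ∀ t ∈ Icc (0 : ℝ) 1, x + t • d ∈ s := fun t ht => hs.add_smul_sub_mem hx hy ht
  let φ : ℝ → ℝ := fun t => f (x + t • d) - t * fderiv ℝ f x d - M / 2 * t ^ 2 * ‖d‖ ^ 2
  have hφ : ∀ t ∈ Icc (0 : ℝ) 1, HasDerivAt φ
      (fderiv ℝ f (x + t • d) d - fderiv ℝ f x d - M * t * ‖d‖ ^ 2) t := by
    intro t ht
    have hline : HasDerivAt (fun t : ℝ => x + t • d) d t := by
      simpa using ((hasDerivAt_id t).smul_const d).const_add x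
    have hcomp := (hf _ (hseg t ht)).hasFDerivAt.comp_hasDerivAt t hline
    refine ((hcomp.fun_sub ((hasDerivAt_id t).mul_const (fderiv ℝ f x d))).fun_sub
      (((hasDerivAt_pow 2 t).const_mul (M / 2)).mul_const (‖d‖ ^ 2))).congr_deriv ?_
    simp only [one_mul, Nat.cast_ofNat, Nat.add_one_sub_one, pow_one]
    ring
  have hφ' : ∀ t ∈ Icc (0 : ℝ) 1,
      fderiv ℝ f (x + t • d) d - fderiv ℝ f x d - M * t * ‖d‖ ^ 2 ≤ 0 := by
    intro t ht
    have hle : (fderiv ℝ f (x + t • d) - fderiv ℝ f x) d ≤ M * ‖t • d‖ * ‖d‖ :=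
      (le_abs_self _).trans <| ((fderiv ℝ f (x + t • d) - fderiv ℝ f x).le_opNorm d).trans <|
        mul_le_mul_of_nonneg_right (by simpa using hlip x hx _ (hseg t ht)) (norm_nonneg d)
    rw [norm_smul, Real.norm_of_nonneg ht.1] at hle
    simp only [_root_.sub_apply] at hle
    nlinarith
  have hanti : AntitoneOn φ (Icc 0 1) :=
    antitoneOn_of_hasDerivWithinAt_nonpos (convex_Icc 0 1)
      (fun t ht => (hφ t ht).continuousAt.continuousWithinAt)
      (fun t ht => (hφ t (interior_subset ht)).hasDerivWithinAt)
      (fun t ht => hφ' t (interior_subset ht))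
  have := hanti (left_mem_Icc.2 zero_le_one) (right_mem_Icc.2 zero_le_one) zero_le_one
  norm_num [φ] at this
  rw [hd, add_sub_cancel] at this
  linarith

theorem Convex.sub_le_ite_of_fderiv_lipschitz {E : Type*} [NormedAddCommGroup E]
    [NormedSpace ℝ E] {f : E → ℝ} {s : Set E} {M c D ℓ : ℝ} {x z : E} (hs : Convex ℝ s)
    (hf : ∀ x ∈ s, DifferentiableAt ℝ f x)
    (hlip : ∀ x ∈ s, ∀ y ∈ s, ‖fderiv ℝ f y - fderiv ℝ f x‖ ≤ M * ‖y - x‖) (hM : 0 ≤ M)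
    (hc : ∀ y ∈ s, c ≤ f y) (hx : x ∈ s) (hz : z ∈ s) (hD : ‖z - x‖ ≤ D)
    (hℓ : fderiv ℝ f x (x - z) = ℓ) (hℓ₀ : 0 ≤ ℓ) :
    c - (f x - ℓ) ≤ if ℓ ≤ M * D ^ 2 then ℓ - ℓ ^ 2 / (2 * M * D ^ 2) else ℓ / 2 := by
  have hstep : ∀ t ∈ Icc (0 : ℝ) 1, c - f x ≤ -(t * ℓ) + M * D ^ 2 / 2 * t ^ 2 := by
    intro t ht
    have hdesc := hs.image_le_add_fderiv_add_half_mul_sq hf hlip hx (hs.add_smul_sub_mem hx hz ht)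
    have hdir : fderiv ℝ f x (z - x) = -ℓ := by rw [← hℓ, ← map_neg, neg_sub]
    have hnorm : ‖t • (z - x)‖ ^ 2 ≤ t ^ 2 * D ^ 2 := by
      rw [norm_smul, mul_pow, Real.norm_eq_abs, sq_abs]
      gcongr
    rw [add_sub_cancel_left, map_smul, hdir, smul_eq_mul] at hdesc
    nlinarith [hc _ (hs.add_smul_sub_mem hx hz ht)]
  have := le_ite_of_forall_le_quadratic hℓ₀ hstep
  rw [mul_assoc 2 M]
  split_ifs at this ⊢ <;> linarith

theorem IsCompact.exists_eq_of_isLUB {α : Type*} [TopologicalSpace α] {s : Set α} {φ : α → ℝ}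
    {a : ℝ} (hs : IsCompact s) (hφ : ContinuousOn φ s) (ha : IsLUB {v | ∃ y ∈ s, v = φ y} a) :
    ∃ y ∈ s, a = φ y := by
  have himage : {v | ∃ y ∈ s, v = φ y} = φ '' s := by
    ext v
    simp only [mem_ofPred_eq, mem_image, eq_comm]
  rw [himage] at ha
  have hne : (φ '' s).Nonempty := by
    by_contra hempty
    rw [not_nonempty_iff_eq_empty.1 hempty, isLUB_empty_iff] at ha
    exact not_isBot a ha
  obtain ⟨y, hy, hya⟩ := ha.mem_of_isClosed hne (hs.image_of_continuousOn hφ).isClosed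
  exact ⟨y, hy, hya.symm⟩

theorem sum_le_div_inf'_of_le_add_dotProduct {ι : Type*} [Fintype ι] [Nonempty ι] {μ v : ι → ℝ}
    {a c : ℝ} (hμ : 0 ≤ μ) (hv : ∀ i, v i < 0) (h : c ≤ a + μ ⬝ᵥ v) :
    ∑ i, μ i ≤ (a - c) / univ.inf' univ_nonempty (fun i => -v i) := by
  set m := univ.inf' univ_nonempty (fun i => -v i)
  have hm : 0 < m := (lt_inf'_iff _).2 fun i _ => neg_pos.2 (hv i)
  have hdot : μ ⬝ᵥ v ≤ -(m * ∑ i, μ i) := by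
    rw [dotProduct, mul_sum, ← sum_neg_distrib]
    refine sum_le_sum fun i _ => ?_
    have : m ≤ -v i := inf'_le (fun i => -v i) (mem_univ i)
    nlinarith [mul_le_mul_of_nonneg_left this (hμ i)]
  rw [le_div_iff₀ hm]
  linarith

theorem norm_gradient_sub_gradient {F : Type*} [NormedAddCommGroup F] [InnerProductSpace ℝ F]
    [CompleteSpace F] (f : F → ℝ) (x y : F) :
    ‖gradient f y - gradient f x‖ = ‖fderiv ℝ f y - fderiv ℝ f x‖ := by
  rw [← toDual_gradient, ← toDual_gradient, ← map_sub, LinearIsometryEquiv.norm_map]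

section Lagrangian

variable {n m q p : ℕ} {A : Matrix (Fin q) (Fin n) ℝ} {B : Matrix (Fin q) (Fin m) ℝ}
  {b : Fin q → ℝ} {f : EuclideanSpace ℝ (Fin n) → EuclideanSpace ℝ (Fin m) → ℝ}
  {g : EuclideanSpace ℝ (Fin n) → EuclideanSpace ℝ (Fin m) → Fin p → ℝ}
  {lam : Fin q → ℝ} {mu : Fin p → ℝ} {x : EuclideanSpace ℝ (Fin m)}

theorem stmt2Lagr_eq_of_feasible {y : EuclideanSpace ℝ (Fin n)} (hy : A *ᵥ y + B *ᵥ x = b) :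
    stmt2Lagr A B b f g lam mu y x = f y x + mu ⬝ᵥ g y x := by
  rw [stmt2Lagr, add_comm (B *ᵥ x), hy, sub_self, dotProduct_zero, add_zero]

theorem sum_le_div_of_slater [NeZero p] {y : EuclideanSpace ℝ (Fin n)}
    (hy : A *ᵥ y + B *ᵥ x = b) (hgy : ∀ i, g y x i < 0) (hmu : 0 ≤ mu) {c : ℝ}
    (hc : c ≤ stmt2Lagr A B b f g lam mu y x) :
    ∑ i, mu i ≤ (f y x - c) / univ.inf' univ_nonempty (fun i => -g y x i) :=
  sum_le_div_inf'_of_le_add_dotProduct hmu hgy (stmt2Lagr_eq_of_feasible hy ▸ hc)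

theorem stmt2Lagr_eq_inner (y : EuclideanSpace ℝ (Fin n)) :
    stmt2Lagr A B b f g lam mu y x =
      f y x + (⟪WithLp.toLp 2 (vecMul lam A), y⟫ + lam ⬝ᵥ (B *ᵥ x - b)) + ∑ i, mu i * g y x i := by
  have hlin : lam ⬝ᵥ (A *ᵥ y) = ⟪WithLp.toLp 2 (vecMul lam A), y⟫ := by
    rw [dotProduct_mulVec, EuclideanSpace.inner_eq_star_dotProduct]
    simp [dotProduct_comm]
  rw [stmt2Lagr, ← hlin, ← dotProduct_add, add_sub_assoc', add_comm (A *ᵥ _)]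
  rfl

theorem hasFDerivAt_stmt2Lagr {y : EuclideanSpace ℝ (Fin n)}
    (hf : DifferentiableAt ℝ (f · x) y) (hg : ∀ i, DifferentiableAt ℝ (g · x i) y) :
    HasFDerivAt (stmt2Lagr A B b f g lam mu · x)
      (fderiv ℝ (f · x) y + innerSL ℝ (WithLp.toLp 2 (vecMul lam A))
        + ∑ i, mu i • fderiv ℝ (g · x i) y) y := by
  simp only [stmt2Lagr_eq_inner]
  exact (hf.hasFDerivAt.add ((innerSL ℝ _).hasFDerivAt.add_const _)).add
    (HasFDerivAt.fun_sum fun i _ => (hg i).hasFDerivAt.const_mul (mu i))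

theorem norm_fderiv_stmt2Lagr_sub_le {Y : Set (EuclideanSpace ℝ (Fin n))} {M₁ M₂ : ℝ}
    (hf : ∀ y, DifferentiableAt ℝ (f · x) y) (hg : ∀ i y, DifferentiableAt ℝ (g · x i) y)
    (hmu : 0 ≤ mu)
    (hflip : ∀ y₁ ∈ Y, ∀ y₂ ∈ Y,
      ‖gradient (f · x) y₂ - gradient (f · x) y₁‖ ≤ M₁ * ‖y₂ - y₁‖)
    (hglip : ∀ i, ∀ y₁ ∈ Y, ∀ y₂ ∈ Y,
      ‖gradient (g · x i) y₂ - gradient (g · x i) y₁‖ ≤ M₂ * ‖y₂ - y₁‖)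
    {y₁ y₂ : EuclideanSpace ℝ (Fin n)} (hy₁ : y₁ ∈ Y) (hy₂ : y₂ ∈ Y) :
    ‖fderiv ℝ (stmt2Lagr A B b f g lam mu · x) y₂ - fderiv ℝ (stmt2Lagr A B b f g lam mu · x) y₁‖
      ≤ (M₁ + (∑ i, mu i) * M₂) * ‖y₂ - y₁‖ := by
  rw [(hasFDerivAt_stmt2Lagr (hf y₂) (hg · y₂)).fderiv,
    (hasFDerivAt_stmt2Lagr (hf y₁) (hg · y₁)).fderiv]
  have hsplit : ∀ (u₁ u₂ v : _) (w₁ w₂ : Fin p → EuclideanSpace ℝ (Fin n) →L[ℝ] ℝ),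
      u₂ + v + ∑ i, mu i • w₂ i - (u₁ + v + ∑ i, mu i • w₁ i)
        = (u₂ - u₁) + ∑ i, mu i • (w₂ i - w₁ i) := by
    intro u₁ u₂ v w₁ w₂
    simp only [smul_sub, sum_sub_distrib]
    abel
  rw [hsplit]
  have hterm : ∀ i, ‖mu i • (fderiv ℝ (g · x i) y₂ - fderiv ℝ (g · x i) y₁)‖
      ≤ mu i * (M₂ * ‖y₂ - y₁‖) := fun i => by
    rw [norm_smul, Real.norm_of_nonneg (hmu i), ← norm_gradient_sub_gradient]
    exact mul_le_mul_of_nonneg_left (hglip i y₁ hy₁ y₂ hy₂) (hmu i)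
  calc _ ≤ ‖fderiv ℝ (f · x) y₂ - fderiv ℝ (f · x) y₁‖
        + ∑ i, ‖mu i • (fderiv ℝ (g · x i) y₂ - fderiv ℝ (g · x i) y₁)‖ :=
        (norm_add_le _ _).trans (add_le_add_right (norm_sum_le _ _) _)
    _ ≤ M₁ * ‖y₂ - y₁‖ + ∑ i, mu i * (M₂ * ‖y₂ - y₁‖) := by
        rw [← norm_gradient_sub_gradient]
        exact add_le_add (hflip y₁ hy₁ y₂ hy₂) (sum_le_sum fun i _ => hterm i)
    _ = (M₁ + (∑ i, mu i) * M₂) * ‖y₂ - y₁‖ := by rw [← sum_mul]; ring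

end Lagrangian

theorem stmt_2_general {n m q p : ℕ} [NeZero p]
    (X : Set (EuclideanSpace ℝ (Fin m)))
    (Y : Set (EuclideanSpace ℝ (Fin n)))
    (hYcomp : IsCompact Y) (hYconv : Convex ℝ Y)
    (A : Matrix (Fin q) (Fin n) ℝ) (B : Matrix (Fin q) (Fin m) ℝ) (b : Fin q → ℝ)
    (f : EuclideanSpace ℝ (Fin n) → EuclideanSpace ℝ (Fin m) → ℝ)
    (g : EuclideanSpace ℝ (Fin n) → EuclideanSpace ℝ (Fin m) → Fin p → ℝ)
    (hfdiff : Differentiable ℝ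
      (fun z : EuclideanSpace ℝ (Fin n) × EuclideanSpace ℝ (Fin m) => f z.1 z.2))
    (hgdiff : ∀ i, Differentiable ℝ
      (fun z : EuclideanSpace ℝ (Fin n) × EuclideanSpace ℝ (Fin m) => g z.1 z.2 i))
    -- (H4): ∇_y f(·,x) is M₁-Lipschitz on Y, uniformly in x ∈ X:
    (M₁ : ℝ) (hM₁ : 0 < M₁)
    (hfgradlip : ∀ x ∈ X, ∀ y₁ ∈ Y, ∀ y₂ ∈ Y,
      ‖gradient (fun y => f y x) y₂ - gradient (fun y => f y x) y₁‖ ≤ M₁ * ‖y₂ - y₁‖)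
    -- (H5): each ∇_y g_i(·,x) is M₂-Lipschitz on Y, uniformly in x ∈ X:
    (M₂ : ℝ) (hM₂ : 0 < M₂)
    (hggradlip : ∀ i, ∀ x ∈ X, ∀ y₁ ∈ Y, ∀ y₂ ∈ Y,
      ‖gradient (fun y => g y x i) y₂ - gradient (fun y => g y x i) y₁‖ ≤ M₂ * ‖y₂ - y₁‖)
    (Q : EuclideanSpace ℝ (Fin m) → ℝ)
    (xbar : EuclideanSpace ℝ (Fin m)) (hxbar : xbar ∈ X)
    (yx : EuclideanSpace ℝ (Fin n)) (hyx : yx ∈ intrinsicInterior ℝ Y)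
    (hyxfeas : A *ᵥ yx + B *ᵥ xbar = b) (hyxstrict : ∀ i, g yx xbar i < 0)
    (ε : ℝ)
    -- ε-optimal feasible primal solution ŷ at x̄:
    (yhat : EuclideanSpace ℝ (Fin n)) (hyhatY : yhat ∈ Y)
    -- ε-optimal feasible dual solution (λ̂, μ̂) at x̄:
    (lam : Fin q → ℝ) (mu : Fin p → ℝ) (hmu : 0 ≤ mu)
    (hdualopt : ∀ y ∈ Y, stmt2Lagr A B b f g lam mu y xbar ≥ Q xbar - ε)
    -- ℓ = max_{y ∈ Y} ⟨∇_y L_x̄(ŷ, λ̂, μ̂), ŷ − y⟩: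
    (ℓ : ℝ)
    (hℓ : IsLUB {v : ℝ | ∃ y ∈ Y,
      v = ⟪gradient (fun y' => stmt2Lagr A B b f g lam mu y' xbar) yhat, yhat - y⟫} ℓ)
    -- L̄ is any lower bound on Q(x̄):
    (Lbar : ℝ) (hLbar : Lbar ≤ Q xbar)
    -- U = (f(y_x̄, x̄) − L̄ + ε) / min_i (−g_i(y_x̄, x̄)) and M₃ = M₁ + U M₂:
    (U M₃ : ℝ)
    (hU : U = (f yx xbar - Lbar + ε) /
      (Finset.univ.inf' Finset.univ_nonempty (fun i => -(g yx xbar i))))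
    (hM₃ : M₃ = M₁ + U * M₂) :
    Q xbar - (stmt2Lagr A B b f g lam mu yhat xbar - ℓ) ≤
      if ℓ ≤ M₃ * Metric.diam Y ^ 2 then
        ε + ℓ - ℓ ^ 2 / (2 * M₃ * Metric.diam Y ^ 2)
      else ε + ℓ / 2 := by
  set L := (stmt2Lagr A B b f g lam mu · xbar)
  have hf : ∀ y, DifferentiableAt ℝ (f · xbar) y := fun y =>
    (hfdiff.comp (differentiable_id.prodMk (differentiable_const xbar))) y
  have hg : ∀ i y, DifferentiableAt ℝ (g · xbar i) y := fun i y =>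
    ((hgdiff i).comp (differentiable_id.prodMk (differentiable_const xbar))) y
  have hmuU : ∑ i, mu i ≤ U := by
    rw [hU, sub_add]
    exact sum_le_div_of_slater hyxfeas hyxstrict hmu
      (by linarith [hdualopt yx (intrinsicInterior_subset hyx)])
  have hM₃₀ : 0 ≤ M₃ := by
    have : 0 ≤ ∑ i, mu i := sum_nonneg fun i _ => hmu i
    rw [hM₃]
    nlinarith
  have hlip : ∀ y₁ ∈ Y, ∀ y₂ ∈ Y, ‖fderiv ℝ L y₂ - fderiv ℝ L y₁‖ ≤ M₃ * ‖y₂ - y₁‖ :=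
    fun y₁ h₁ y₂ h₂ => (norm_fderiv_stmt2Lagr_sub_le hf hg hmu (hfgradlip xbar hxbar)
      (hggradlip · xbar hxbar) h₁ h₂).trans (by rw [hM₃]; gcongr)
  obtain ⟨ystar, hystar, hℓeq⟩ := hYcomp.exists_eq_of_isLUB (by fun_prop) hℓ
  have hℓ₀ : 0 ≤ ℓ := hℓ.1 ⟨yhat, hyhatY, by simp⟩
  have hdiam : ‖ystar - yhat‖ ≤ Metric.diam Y := by
    simpa [dist_eq_norm] using Metric.dist_le_diam_of_mem hYcomp.isBounded hystar hyhatY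
  have := hYconv.sub_le_ite_of_fderiv_lipschitz
    (fun y _ => (hasFDerivAt_stmt2Lagr (hf y) (hg · y)).differentiableAt) hlip hM₃₀ hdualopt
    hyhatY hystar hdiam (by rw [hℓeq, inner_gradient_left]) hℓ₀
  split_ifs at this ⊢ <;> linarith

/-- Refined bound on the inexactness of the cut (Proposition 2.3). -/
theorem stmt_2 {n m q p : ℕ} [NeZero p]
    (X : Set (EuclideanSpace ℝ (Fin m))) (hXne : X.Nonempty)
    (hXcomp : IsCompact X) (hXconv : Convex ℝ X)
    (Y : Set (EuclideanSpace ℝ (Fin n))) (hYne : Y.Nonempty)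
    (hYcomp : IsCompact Y) (hYconv : Convex ℝ Y)
    (A : Matrix (Fin q) (Fin n) ℝ) (B : Matrix (Fin q) (Fin m) ℝ) (b : Fin q → ℝ)
    (f : EuclideanSpace ℝ (Fin n) → EuclideanSpace ℝ (Fin m) → ℝ)
    (g : EuclideanSpace ℝ (Fin n) → EuclideanSpace ℝ (Fin m) → Fin p → ℝ)
    (hfconv : ConvexOn ℝ Set.univ
      (fun z : EuclideanSpace ℝ (Fin n) × EuclideanSpace ℝ (Fin m) => f z.1 z.2))
    (hgconv : ∀ i, ConvexOn ℝ Set.univ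
      (fun z : EuclideanSpace ℝ (Fin n) × EuclideanSpace ℝ (Fin m) => g z.1 z.2 i))
    (hfdiff : Differentiable ℝ
      (fun z : EuclideanSpace ℝ (Fin n) × EuclideanSpace ℝ (Fin m) => f z.1 z.2))
    (hgdiff : ∀ i, Differentiable ℝ
      (fun z : EuclideanSpace ℝ (Fin n) × EuclideanSpace ℝ (Fin m) => g z.1 z.2 i))
    -- (H4): ∇_y f(·,x) is M₁-Lipschitz on Y, uniformly in x ∈ X:
    (M₁ : ℝ) (hM₁ : 0 < M₁)
    (hfgradlip : ∀ x ∈ X, ∀ y₁ ∈ Y, ∀ y₂ ∈ Y,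
      ‖gradient (fun y => f y x) y₂ - gradient (fun y => f y x) y₁‖ ≤ M₁ * ‖y₂ - y₁‖)
    -- (H5): each ∇_y g_i(·,x) is M₂-Lipschitz on Y, uniformly in x ∈ X:
    (M₂ : ℝ) (hM₂ : 0 < M₂)
    (hggradlip : ∀ i, ∀ x ∈ X, ∀ y₁ ∈ Y, ∀ y₂ ∈ Y,
      ‖gradient (fun y => g y x i) y₂ - gradient (fun y => g y x i) y₁‖ ≤ M₂ * ‖y₂ - y₁‖)
    -- Slater condition, with Slater point y_x̄ at x̄:
    (hslater : ∀ x ∈ X, ∃ y ∈ intrinsicInterior ℝ Y,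
      A *ᵥ y + B *ᵥ x = b ∧ ∀ i, g y x i < 0)
    (Q : EuclideanSpace ℝ (Fin m) → ℝ)
    (hQ : ∀ x ∈ X, IsGLB {v : ℝ | ∃ y ∈ Y,
      A *ᵥ y + B *ᵥ x = b ∧ (∀ i, g y x i ≤ 0) ∧ v = f y x} (Q x))
    (xbar : EuclideanSpace ℝ (Fin m)) (hxbar : xbar ∈ X)
    (yx : EuclideanSpace ℝ (Fin n)) (hyx : yx ∈ intrinsicInterior ℝ Y)
    (hyxfeas : A *ᵥ yx + B *ᵥ xbar = b) (hyxstrict : ∀ i, g yx xbar i < 0)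
    (ε : ℝ) (hε : 0 ≤ ε)
    -- ε-optimal feasible primal solution ŷ at x̄:
    (yhat : EuclideanSpace ℝ (Fin n)) (hyhatY : yhat ∈ Y)
    (hyhatfeas : A *ᵥ yhat + B *ᵥ xbar = b ∧ ∀ i, g yhat xbar i ≤ 0)
    (hyhatopt : f yhat xbar ≤ Q xbar + ε)
    -- ε-optimal feasible dual solution (λ̂, μ̂) at x̄:
    (lam : Fin q → ℝ) (mu : Fin p → ℝ) (hmu : 0 ≤ mu)
    (hdualopt : ∀ y ∈ Y, stmt2Lagr A B b f g lam mu y xbar ≥ Q xbar - ε)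
    -- ℓ = max_{y ∈ Y} ⟨∇_y L_x̄(ŷ, λ̂, μ̂), ŷ − y⟩:
    (ℓ : ℝ)
    (hℓ : IsLUB {v : ℝ | ∃ y ∈ Y,
      v = ⟪gradient (fun y' => stmt2Lagr A B b f g lam mu y' xbar) yhat, yhat - y⟫} ℓ)
    -- L̄ is any lower bound on Q(x̄):
    (Lbar : ℝ) (hLbar : Lbar ≤ Q xbar)
    -- U = (f(y_x̄, x̄) − L̄ + ε) / min_i (−g_i(y_x̄, x̄)) and M₃ = M₁ + U M₂:
    (U M₃ : ℝ)
    (hU : U = (f yx xbar - Lbar + ε) /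
      (Finset.univ.inf' Finset.univ_nonempty (fun i => -(g yx xbar i))))
    (hM₃ : M₃ = M₁ + U * M₂) :
    Q xbar - (stmt2Lagr A B b f g lam mu yhat xbar - ℓ) ≤
      if ℓ ≤ M₃ * Metric.diam Y ^ 2 then
        ε + ℓ - ℓ ^ 2 / (2 * M₃ * Metric.diam Y ^ 2)
      else ε + ℓ / 2 :=
  stmt_2_general X Y hYcomp hYconv A B b f g hfdiff hgdiff M₁ hM₁ hfgradlip M₂ hM₂ hggradlip Q xbar
    hxbar yx hyx hyxfeas hyxstrict ε yhat hyhatY lam mu hmu hdualopt ℓ hℓ Lbar hLbar U M₃ hU hM₃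
end

section
/- For the convex problem f* = min{f(y) : Ay = b, g(y) ≤ 0, y ∈ Y}, under the Slater condition (existence of κ > 0 and y₀ ∈ ri(Y) with g(y₀) ≤ −κ𝟙 and Ay₀ = b), let r satisfy 0 < r ≤ κ/(2 L(g)) and B(y₀, r) ∩ Aff(Y) ⊆ Y; let ρ* > 0 be such that B_q(0, ρ*) ∩ (A·Aff(Y) − b) ⊆ A(B(y₀, r) ∩ Aff(Y)) − b; and let 𝓛 be any lower bound on f*. Then any ε-optimal solution (λ(ε), μ(ε)) of the dual problem max{θ(λ,μ) : μ ≥ 0, λ = Ay − b, y ∈ Aff(Y)} satisfies ‖(λ(ε), μ(ε))‖ ≤ (f(y₀) − 𝓛 + ε + L(f)·r)/min(ρ*, κ/2). -/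
/-!
Test the ε-optimality of `(λ, μ)` at a point `y₁ ∈ B(y₀, r) ∩ Aff(Y)` with
`A y₁ - b = -(ρ*/‖λ‖) λ`, which exists by the choice of `ρ*` since `λ ∈ A·Aff(Y) - b`. At `y₁`
the Lipschitz bounds give `g(y₁) ≤ -(κ/2)𝟙` and `f(y₁) ≤ f(y₀) + L(f) r`, hence
`𝓛 - ε ≤ f(y₁) + ⟨λ, A y₁ - b⟩ + ⟨μ, g(y₁)⟩ ≤ f(y₀) + L(f) r - ρ* ‖λ‖ - (κ/2) ∑ μᵢ`,
and `‖(λ, μ)‖ ≤ ‖λ‖ + ∑ μᵢ` because `μ ≥ 0`.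
-/

open Matrix

section TestPoint

variable {ι κ : Type*} [Fintype ι]

lemma mulVec_lineMap_sub (A : Matrix κ ι ℝ) {b : κ → ℝ} {y₀ : EuclideanSpace ℝ ι}
    (hy₀ : A *ᵥ y₀ = b) (y : EuclideanSpace ℝ ι) (t : ℝ) :
    A *ᵥ AffineMap.lineMap y₀ y t - b = t • (A *ᵥ y - b) := by
  simp [AffineMap.lineMap_apply, mulVec_add, mulVec_smul, mulVec_sub, hy₀, smul_sub]

lemma EuclideanSpace.dotProduct_self_eq_norm_sq (x : EuclideanSpace ℝ ι) :
    x ⬝ᵥ x = ‖x‖ ^ 2 := by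
  rw [← real_inner_self_eq_norm_sq, EuclideanSpace.inner_eq_star_dotProduct, star_trivial]

variable [Fintype κ]

lemma exists_mem_closedBall_dotProduct_mulVec_sub_eq {A : Matrix κ ι ℝ} {b : κ → ℝ}
    {S : AffineSubspace ℝ (EuclideanSpace ℝ ι)} {y₀ : EuclideanSpace ℝ ι} {r ρ : ℝ}
    (hy₀S : y₀ ∈ S) (hy₀A : A *ᵥ y₀ = b) (hρ : 0 ≤ ρ)
    (hincl : ∀ z : EuclideanSpace ℝ κ, ‖z‖ ≤ ρ →
      (∃ y ∈ (S : Set (EuclideanSpace ℝ ι)), z = A *ᵥ y - b) →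
      ∃ y ∈ Metric.closedBall y₀ r ∩ (S : Set (EuclideanSpace ℝ ι)), z = A *ᵥ y - b)
    {lam : EuclideanSpace ℝ κ}
    (hlam : ∃ y ∈ (S : Set (EuclideanSpace ℝ ι)), lam = (A *ᵥ y - b : κ → ℝ)) :
    ∃ y ∈ Metric.closedBall y₀ r ∩ (S : Set (EuclideanSpace ℝ ι)),
      lam ⬝ᵥ (A *ᵥ y - b) = -(ρ * ‖lam‖) := by
  obtain ⟨y, hyS, hy⟩ := hlam
  -- for `lam = 0` the factor `-(ρ / ‖lam‖)` is `0`, and the argument goes through unchanged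
  have hz : ‖-(ρ / ‖lam‖) • lam‖ ≤ ρ := by
    rw [norm_smul, norm_neg, Real.norm_of_nonneg (by positivity)]
    rcases (norm_nonneg lam).eq_or_lt with h | h
    · simp [← h, hρ]
    · rw [div_mul_cancel₀ _ h.ne']
  obtain ⟨y₁, hy₁, hz₁⟩ := hincl _ hz ⟨_, AffineMap.lineMap_mem _ hy₀S hyS, by
    rw [WithLp.ofLp_smul, hy, mulVec_lineMap_sub A hy₀A]⟩
  refine ⟨y₁, hy₁, ?_⟩
  rw [← hz₁, WithLp.ofLp_smul, dotProduct_smul, EuclideanSpace.dotProduct_self_eq_norm_sq,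
    smul_eq_mul, neg_mul, div_mul_eq_mul_div, mul_div_assoc, sq, mul_self_div_self]

end TestPoint

lemma le_add_mul_of_abs_sub_le {x x₀ d r L : ℝ} (hL : 0 ≤ L) (hx : |x - x₀| ≤ L * d)
    (hd : d ≤ r) : x ≤ x₀ + L * r := by
  linarith [(abs_le.1 hx).2, mul_le_mul_of_nonneg_left hd hL]

section NonnegWeights

variable {ι : Type*} [Fintype ι] {μ : ι → ℝ}

lemma dotProduct_le_neg_mul_sum {v : ι → ℝ} {c : ℝ} (hμ : 0 ≤ μ) (hv : ∀ i, v i ≤ -c) :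
    μ ⬝ᵥ v ≤ -c * ∑ i, μ i :=
  calc μ ⬝ᵥ v ≤ μ ⬝ᵥ fun _ => -c := dotProduct_le_dotProduct_of_nonneg_left hv hμ
    _ = -c * ∑ i, μ i := by simp [dotProduct, Finset.mul_sum, mul_comm]

lemma sqrt_sq_add_sum_sq_le_add_sum {a : ℝ} (ha : 0 ≤ a) (hμ : 0 ≤ μ) :
    √(a ^ 2 + ∑ i, μ i ^ 2) ≤ a + ∑ i, μ i := by
  have hs : 0 ≤ ∑ i, μ i := Finset.sum_nonneg fun i _ => hμ i
  rw [Real.sqrt_le_iff]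
  refine ⟨by positivity, ?_⟩
  nlinarith [Finset.sum_sq_le_sq_sum_of_nonneg (s := Finset.univ) fun i _ => hμ i,
    mul_nonneg ha hs]

lemma sqrt_sq_add_sum_sq_le_div_min {a ρ c B : ℝ} (ha : 0 ≤ a) (hμ : 0 ≤ μ) (hρ : 0 < ρ)
    (hc : 0 < c) (h : ρ * a + c * ∑ i, μ i ≤ B) :
    √(a ^ 2 + ∑ i, μ i ^ 2) ≤ B / min ρ c := by
  have hs : 0 ≤ ∑ i, μ i := Finset.sum_nonneg fun i _ => hμ i
  rw [le_div_iff₀ (lt_min hρ hc)]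
  calc √(a ^ 2 + ∑ i, μ i ^ 2) * min ρ c ≤ (a + ∑ i, μ i) * min ρ c :=
        mul_le_mul_of_nonneg_right (sqrt_sq_add_sum_sq_le_add_sum ha hμ) (le_min hρ.le hc.le)
    _ ≤ ρ * a + c * ∑ i, μ i := by
        rw [add_mul, mul_comm ρ, mul_comm c]
        gcongr
        exacts [min_le_left _ _, min_le_right _ _]
    _ ≤ B := h

end NonnegWeights

theorem stmt_3_general {n q p : ℕ}
    (Y : Set (EuclideanSpace ℝ (Fin n)))
    (A : Matrix (Fin q) (Fin n) ℝ) (b : Fin q → ℝ)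
    (f : EuclideanSpace ℝ (Fin n) → ℝ)
    (g : EuclideanSpace ℝ (Fin n) → Fin p → ℝ)
    (Lf : ℝ) (hLf : 0 ≤ Lf)
    (hflip : ∀ y₁ ∈ Y, ∀ y₂ ∈ Y, |f y₁ - f y₂| ≤ Lf * ‖y₁ - y₂‖)
    (Lg : ℝ) (hLg : 0 < Lg)
    (hglip : ∀ i, ∀ y₁ ∈ Y, ∀ y₂ ∈ Y, |g y₁ i - g y₂ i| ≤ Lg * ‖y₁ - y₂‖)
    (fstar : ℝ)
    -- Slater condition SL:
    (κ : ℝ) (hκ : 0 < κ)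
    (y₀ : EuclideanSpace ℝ (Fin n)) (hy₀ : y₀ ∈ intrinsicInterior ℝ Y)
    (hy₀g : ∀ i, g y₀ i ≤ -κ) (hy₀A : A *ᵥ y₀ = b)
    -- radius r with B(y₀, r) ∩ Aff(Y) ⊆ Y:
    (r : ℝ) (hrκ : r ≤ κ / (2 * Lg))
    (hrY : Metric.closedBall y₀ r ∩ (affineSpan ℝ Y : Set (EuclideanSpace ℝ (Fin n))) ⊆ Y)
    -- ρ* > 0 with B_q(0, ρ*) ∩ (A·Aff(Y) − b) ⊆ A(B(y₀, r) ∩ Aff(Y)) − b: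
    (ρstar : ℝ) (hρstar : 0 < ρstar)
    (hincl : ∀ z : EuclideanSpace ℝ (Fin q), ‖z‖ ≤ ρstar →
      (∃ y ∈ (affineSpan ℝ Y : Set (EuclideanSpace ℝ (Fin n))), z = A *ᵥ y - b) →
      ∃ y ∈ Metric.closedBall y₀ r ∩ (affineSpan ℝ Y : Set (EuclideanSpace ℝ (Fin n))),
        z = A *ᵥ y - b)
    -- 𝓛 is any lower bound on f*:
    (𝓛 : ℝ) (h𝓛 : 𝓛 ≤ fstar)
    (ε : ℝ)
    -- (λ(ε), μ(ε)) is an ε-optimal feasible solution of the dual problem: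
    (lam : EuclideanSpace ℝ (Fin q)) (mu : Fin p → ℝ) (hmu : 0 ≤ mu)
    (hlamfeas : ∃ y ∈ (affineSpan ℝ Y : Set (EuclideanSpace ℝ (Fin n))),
      lam = (A *ᵥ y - b : Fin q → ℝ))
    -- θ(λ(ε), μ(ε)) ≥ f* − ε (the dual optimal value is f* by strong duality):
    (hdualopt : ∀ y ∈ Y,
      f y + lam ⬝ᵥ (A *ᵥ y - b) + mu ⬝ᵥ g y ≥ fstar - ε) :
    Real.sqrt (‖lam‖ ^ 2 + (∑ i, (mu i) ^ 2)) ≤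
      (f y₀ - 𝓛 + ε + Lf * r) / min ρstar (κ / 2) := by
  have hy₀Y : y₀ ∈ Y := intrinsicInterior_subset hy₀
  obtain ⟨y₁, ⟨hy₁r, hy₁S⟩, hdot⟩ := exists_mem_closedBall_dotProduct_mulVec_sub_eq
    (subset_affineSpan ℝ Y hy₀Y) hy₀A hρstar.le hincl hlamfeas
  have hy₁Y : y₁ ∈ Y := hrY ⟨hy₁r, hy₁S⟩
  have hdist : ‖y₁ - y₀‖ ≤ r := mem_closedBall_iff_norm.1 hy₁r
  have hf : f y₁ ≤ f y₀ + Lf * r :=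
    le_add_mul_of_abs_sub_le hLf (hflip y₁ hy₁Y y₀ hy₀Y) hdist
  have hLgr : Lg * r ≤ κ / 2 := by
    have := (le_div_iff₀ (by positivity)).1 hrκ
    linarith
  have hg : ∀ i, g y₁ i ≤ -(κ / 2) := fun i => by
    linarith [hy₀g i, le_add_mul_of_abs_sub_le hLg.le (hglip i y₁ hy₁Y y₀ hy₀Y) hdist]
  have hmu_g : mu ⬝ᵥ g y₁ ≤ -(κ / 2) * ∑ i, mu i := dotProduct_le_neg_mul_sum hmu hg
  have key : ρstar * ‖lam‖ + κ / 2 * ∑ i, mu i ≤ f y₀ - 𝓛 + ε + Lf * r := by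
    linarith [hdualopt y₁ hy₁Y]
  exact sqrt_sq_add_sum_sq_le_div_min (norm_nonneg lam) hmu hρstar (by positivity) key

/-- Bound on the norm of ε-optimal dual solutions (Proposition 3.1). -/
theorem stmt_3 {n q p : ℕ}
    (Y : Set (EuclideanSpace ℝ (Fin n))) (hYcl : IsClosed Y) (hYconv : Convex ℝ Y)
    (A : Matrix (Fin q) (Fin n) ℝ) (b : Fin q → ℝ)
    (f : EuclideanSpace ℝ (Fin n) → ℝ)
    (g : EuclideanSpace ℝ (Fin n) → Fin p → ℝ)
    (hfconv : ConvexOn ℝ Y f)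
    (Lf : ℝ) (hLf : 0 ≤ Lf)
    (hflip : ∀ y₁ ∈ Y, ∀ y₂ ∈ Y, |f y₁ - f y₂| ≤ Lf * ‖y₁ - y₂‖)
    (hgconv : ∀ i, ConvexOn ℝ Y (fun y => g y i))
    (Lg : ℝ) (hLg : 0 < Lg)
    (hglip : ∀ i, ∀ y₁ ∈ Y, ∀ y₂ ∈ Y, |g y₁ i - g y₂ i| ≤ Lg * ‖y₁ - y₂‖)
    -- f* is the optimal value (f bounded below on the feasible set):
    (fstar : ℝ)
    (hfstar : IsGLB {v : ℝ | ∃ y ∈ Y,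
      A *ᵥ y = b ∧ (∀ i, g y i ≤ 0) ∧ v = f y} fstar)
    -- Slater condition SL:
    (κ : ℝ) (hκ : 0 < κ)
    (y₀ : EuclideanSpace ℝ (Fin n)) (hy₀ : y₀ ∈ intrinsicInterior ℝ Y)
    (hy₀g : ∀ i, g y₀ i ≤ -κ) (hy₀A : A *ᵥ y₀ = b)
    -- radius r with B(y₀, r) ∩ Aff(Y) ⊆ Y:
    (r : ℝ) (hr : 0 < r) (hrκ : r ≤ κ / (2 * Lg))
    (hrY : Metric.closedBall y₀ r ∩ (affineSpan ℝ Y : Set (EuclideanSpace ℝ (Fin n))) ⊆ Y)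
    -- ρ* > 0 with B_q(0, ρ*) ∩ (A·Aff(Y) − b) ⊆ A(B(y₀, r) ∩ Aff(Y)) − b:
    (ρstar : ℝ) (hρstar : 0 < ρstar)
    (hincl : ∀ z : EuclideanSpace ℝ (Fin q), ‖z‖ ≤ ρstar →
      (∃ y ∈ (affineSpan ℝ Y : Set (EuclideanSpace ℝ (Fin n))), z = A *ᵥ y - b) →
      ∃ y ∈ Metric.closedBall y₀ r ∩ (affineSpan ℝ Y : Set (EuclideanSpace ℝ (Fin n))),
        z = A *ᵥ y - b)
    -- 𝓛 is any lower bound on f*: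
    (𝓛 : ℝ) (h𝓛 : 𝓛 ≤ fstar)
    (ε : ℝ) (hε : 0 ≤ ε)
    -- (λ(ε), μ(ε)) is an ε-optimal feasible solution of the dual problem:
    (lam : EuclideanSpace ℝ (Fin q)) (mu : Fin p → ℝ) (hmu : 0 ≤ mu)
    (hlamfeas : ∃ y ∈ (affineSpan ℝ Y : Set (EuclideanSpace ℝ (Fin n))),
      lam = (A *ᵥ y - b : Fin q → ℝ))
    -- θ(λ(ε), μ(ε)) ≥ f* − ε (the dual optimal value is f* by strong duality):
    (hdualopt : ∀ y ∈ Y,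
      f y + lam ⬝ᵥ (A *ᵥ y - b) + mu ⬝ᵥ g y ≥ fstar - ε) :
    Real.sqrt (‖lam‖ ^ 2 + (∑ i, (mu i) ^ 2)) ≤
      (f y₀ - 𝓛 + ε + Lf * r) / min ρstar (κ / 2) :=
  stmt_3_general Y A b f g Lf hLf hflip Lg hLg hglip fstar κ hκ y₀ hy₀ hy₀g hy₀A r hrκ hrY ρstar
    hρstar hincl 𝓛 h𝓛 ε lam mu hmu hlamfeas hdualopt
end

section
/- Let Y ⊆ ℝ^n be closed and convex, y₀ ∈ Y, A ∈ ℝ^{q×n} nonzero, b ∈ ℝ^q, r > 0, and let V_Y = {x − y : x, y ∈ Aff(Y)} be the direction space of Aff(Y). Define ρ(z) = max{t‖z‖ : t ≥ 0, tz ∈ A(B_n(0, r) ∩ V_Y)} for z ∈ A·Aff(Y) − b, and ρ* = min{ρ(z) : ‖z‖ = 1, z ∈ A·V_Y}. Then ρ* > 0 and B_q(0, ρ*) ∩ (A·Aff(Y) − b) ⊆ A(B_n(y₀, r) ∩ Aff(Y)) − b. -/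
/-!
Write `V` for the direction of `Aff(Y)` and `K = B(0, r) ∩ V`. Since `A y₀ = b`, the set
`A·Aff(Y) − b` is the linear image `A V`, so the claim is `B(0, ρ*) ∩ A V ⊆ A K`.
If `u = A v` is a unit vector of `A V`, rescaling `v` onto the sphere of radius `r` gives
`ρ(u) ≥ r / ‖v‖ > 0`, hence `ρ* > 0`. If `z ∈ A V` and `0 < ‖z‖ ≤ ρ*`, the unit vector
`u = z / ‖z‖` satisfies `ρ(u) u ∈ A K` and `‖z‖ ≤ ρ* ≤ ρ(u)`; as `A K` is star-shaped about `0`,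
`z = ‖z‖ u ∈ A K`.
-/

open Matrix Metric Set

theorem StarConvex.smul_mem_of_le {𝕜 M : Type*} [Field 𝕜] [LinearOrder 𝕜] [IsStrictOrderedRing 𝕜]
    [AddCommGroup M] [Module 𝕜 M] {S : Set M} (hS : StarConvex 𝕜 0 S) {u : M} {c t : 𝕜}
    (hc : 0 ≤ c) (hct : c ≤ t) (ht : t • u ∈ S) : c • u ∈ S := by
  rcases (hc.trans hct).eq_or_lt with rfl | htpos
  · obtain rfl : c = 0 := le_antisymm hct hc
    simpa using hS.mem ⟨_, ht⟩
  · have h := hS.smul_mem ht (div_nonneg hc htpos.le) (div_le_one_of_le₀ hct htpos.le)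
    rwa [smul_smul, div_mul_cancel₀ c htpos.ne'] at h

theorem AffineSubspace.exists_eq_sub_iff {k E F : Type*} [Ring k] [AddCommGroup E] [Module k E]
    [AddCommGroup F] [Module k F] {P : AffineSubspace k E} {y₀ : E} (hy₀ : y₀ ∈ P)
    (f : E →ₗ[k] F) (z : F) :
    (∃ y ∈ P, z = f y - f y₀) ↔ ∃ v ∈ P.direction, z = f v := by
  constructor
  · rintro ⟨y, hy, rfl⟩
    exact ⟨y - y₀, P.vsub_mem_direction hy hy₀, (map_sub f y y₀).symm⟩
  · rintro ⟨v, hv, rfl⟩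
    exact ⟨v + y₀, P.vadd_mem_of_mem_direction hv hy₀, by simp⟩

theorem Matrix.ofLp_eq_mulVec_iff {m n R : Type*} [Fintype n] [DecidableEq n] [CommRing R]
    {p q : ENNReal} (A : Matrix m n R) (z : WithLp q (m → R)) (v : WithLp p (n → R)) :
    z.ofLp = A *ᵥ v.ofLp ↔ z = toLpLin p q A v := by
  rw [← (WithLp.ofLp_injective q).eq_iff, ofLp_toLpLin, toLin'_apply]

section Radial

variable {E F : Type*} [NormedAddCommGroup E] [NormedSpace ℝ E]
  [NormedAddCommGroup F] [NormedSpace ℝ F] (f : E →ₗ[ℝ] F) (V : Submodule ℝ E) (r : ℝ)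

/-- The set whose maximum is `ρ(z)`. -/
def radialSet (z : F) : Set ℝ :=
  {s | ∃ t : ℝ, 0 ≤ t ∧ s = t * ‖z‖ ∧ ∃ v ∈ closedBall (0 : E) r ∩ V, t • z = f v}

theorem starConvex_image_closedBall_inter {r : ℝ} (hr : 0 ≤ r) :
    StarConvex ℝ 0 (f '' (closedBall (0 : E) r ∩ V)) := by
  simpa using (((convex_closedBall 0 r).inter V.convex).starConvex
    ⟨mem_closedBall_self hr, V.zero_mem⟩).linear_image f

variable {f V r}

theorem pos_of_mem_upperBounds_radialSet (hr : 0 < r) {z : F} (hz : z ≠ 0)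
    (hzV : ∃ v ∈ V, z = f v) {s : ℝ} (hs : s ∈ upperBounds (radialSet f V r z)) : 0 < s := by
  obtain ⟨v, hv, rfl⟩ := hzV
  have hv₀ : 0 < ‖v‖ := norm_pos_iff.mpr fun h => hz (by simp [h])
  refine lt_of_lt_of_le (by positivity)
    (hs ⟨r / ‖v‖, by positivity, rfl, (r / ‖v‖) • v, ⟨?_, ?_⟩, ?_⟩)
  · rw [mem_closedBall_zero_iff, norm_smul, Real.norm_of_nonneg (by positivity),
      div_mul_cancel₀ r hv₀.ne']
  · exact V.smul_mem _ hv
  · rw [map_smul]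

theorem mem_image_closedBall_inter_of_norm_le (hr : 0 ≤ r) {ρ : F → ℝ} {ρstar : ℝ}
    (hρ : ∀ z, (∃ v ∈ V, z = f v) → IsGreatest (radialSet f V r z) (ρ z))
    (hρstar : ρstar ∈ lowerBounds {s | ∃ u : F, ‖u‖ = 1 ∧ (∃ v ∈ V, u = f v) ∧ s = ρ u})
    {z : F} (hz : ‖z‖ ≤ ρstar) (hzV : ∃ v ∈ V, z = f v) :
    z ∈ f '' (closedBall 0 r ∩ V) := by
  rcases eq_or_ne z 0 with rfl | hz₀
  · exact ⟨0, ⟨mem_closedBall_self hr, V.zero_mem⟩, map_zero f⟩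
  obtain ⟨v, hv, rfl⟩ := hzV
  set u := ‖f v‖⁻¹ • f v
  have hu : ‖u‖ = 1 := norm_smul_inv_norm hz₀
  have huV : ∃ w ∈ V, u = f w := ⟨‖f v‖⁻¹ • v, V.smul_mem _ hv, (map_smul f _ v).symm⟩
  obtain ⟨t, -, hρu, w, hw, htw⟩ := (hρ u huV).1
  rw [hu, mul_one] at hρu
  have hzt : ‖f v‖ ≤ t := hρu ▸ hz.trans (hρstar ⟨u, hu, huV, rfl⟩)
  have h := (starConvex_image_closedBall_inter f V hr).smul_mem_of_le (norm_nonneg _) hzt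
    ⟨w, hw, htw.symm⟩
  rwa [smul_inv_smul₀ (norm_ne_zero_iff.mpr hz₀)] at h

end Radial

theorem stmt_4_general {n q : ℕ}
    (Y : Set (EuclideanSpace ℝ (Fin n)))
    (y₀ : EuclideanSpace ℝ (Fin n)) (hy₀ : y₀ ∈ Y)
    (A : Matrix (Fin q) (Fin n) ℝ)
    (b : Fin q → ℝ) (hAy₀ : A *ᵥ y₀ = b)
    (r : ℝ) (hr : 0 < r)
    -- ρ(z) = max{t‖z‖ : t ≥ 0, t • z ∈ A(B_n(0, r) ∩ V_Y)}:
    (ρ : EuclideanSpace ℝ (Fin q) → ℝ)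
    (hρ : ∀ z : EuclideanSpace ℝ (Fin q),
      (∃ y ∈ (affineSpan ℝ Y : Set (EuclideanSpace ℝ (Fin n))), z = A *ᵥ y - b) →
      IsGreatest {s : ℝ | ∃ t : ℝ, 0 ≤ t ∧ s = t * ‖z‖ ∧
        ∃ v ∈ Metric.closedBall (0 : EuclideanSpace ℝ (Fin n)) r ∩
          ((affineSpan ℝ Y).direction : Set (EuclideanSpace ℝ (Fin n))),
          t • z = (A *ᵥ v : Fin q → ℝ)} (ρ z))
    -- ρ* = min{ρ(z) : ‖z‖ = 1, z ∈ A·V_Y}: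
    (ρstar : ℝ)
    (hρstar : IsLeast {s : ℝ | ∃ z : EuclideanSpace ℝ (Fin q), ‖z‖ = 1 ∧
      (∃ v ∈ ((affineSpan ℝ Y).direction : Set (EuclideanSpace ℝ (Fin n))),
        z = (A *ᵥ v : Fin q → ℝ)) ∧ s = ρ z} ρstar) :
    0 < ρstar ∧
    ∀ z : EuclideanSpace ℝ (Fin q), ‖z‖ ≤ ρstar →
      (∃ y ∈ (affineSpan ℝ Y : Set (EuclideanSpace ℝ (Fin n))), z = A *ᵥ y - b) →
      ∃ y ∈ Metric.closedBall y₀ r ∩ (affineSpan ℝ Y : Set (EuclideanSpace ℝ (Fin n))),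
        z = A *ᵥ y - b := by
  subst hAy₀
  have hy₀P := subset_affineSpan ℝ Y hy₀
  simp only [← mulVec_sub, ← WithLp.ofLp_sub, ← WithLp.ofLp_smul, ofLp_eq_mulVec_iff, map_sub,
    SetLike.mem_coe, AffineSubspace.exists_eq_sub_iff hy₀P] at hρ hρstar ⊢
  refine ⟨?_, fun z hz hzV => ?_⟩
  · obtain ⟨z₀, hz₀, hz₀V, rfl⟩ := hρstar.1
    exact pos_of_mem_upperBounds_radialSet hr (norm_ne_zero_iff.mp (hz₀ ▸ one_ne_zero)) hz₀V
      (hρ z₀ hz₀V).2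
  · obtain ⟨w, ⟨hw, hwV⟩, rfl⟩ := mem_image_closedBall_inter_of_norm_le hr.le hρ hρstar.2 hz hzV
    refine ⟨y₀ + w, ⟨?_, ?_⟩, by simp⟩
    · simpa [dist_eq_norm] using hw
    · simpa [add_comm] using AffineSubspace.vadd_mem_of_mem_direction hwV hy₀P

/-- The radius ρ* is positive and
B_q(0, ρ*) ∩ (A·Aff(Y) − b) ⊆ A(B_n(y₀, r) ∩ Aff(Y)) − b. -/
theorem stmt_4 {n q : ℕ}
    (Y : Set (EuclideanSpace ℝ (Fin n))) (hYcl : IsClosed Y) (hYconv : Convex ℝ Y)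
    (y₀ : EuclideanSpace ℝ (Fin n)) (hy₀ : y₀ ∈ Y)
    (A : Matrix (Fin q) (Fin n) ℝ) (hA : A ≠ 0)
    (b : Fin q → ℝ) (hAy₀ : A *ᵥ y₀ = b)
    (r : ℝ) (hr : 0 < r)
    -- ρ(z) = max{t‖z‖ : t ≥ 0, t • z ∈ A(B_n(0, r) ∩ V_Y)}:
    (ρ : EuclideanSpace ℝ (Fin q) → ℝ)
    (hρ : ∀ z : EuclideanSpace ℝ (Fin q),
      (∃ y ∈ (affineSpan ℝ Y : Set (EuclideanSpace ℝ (Fin n))), z = A *ᵥ y - b) →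
      IsGreatest {s : ℝ | ∃ t : ℝ, 0 ≤ t ∧ s = t * ‖z‖ ∧
        ∃ v ∈ Metric.closedBall (0 : EuclideanSpace ℝ (Fin n)) r ∩
          ((affineSpan ℝ Y).direction : Set (EuclideanSpace ℝ (Fin n))),
          t • z = (A *ᵥ v : Fin q → ℝ)} (ρ z))
    -- ρ* = min{ρ(z) : ‖z‖ = 1, z ∈ A·V_Y}:
    (ρstar : ℝ)
    (hρstar : IsLeast {s : ℝ | ∃ z : EuclideanSpace ℝ (Fin q), ‖z‖ = 1 ∧
      (∃ v ∈ ((affineSpan ℝ Y).direction : Set (EuclideanSpace ℝ (Fin n))),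
        z = (A *ᵥ v : Fin q → ℝ)) ∧ s = ρ z} ρstar) :
    0 < ρstar ∧
    ∀ z : EuclideanSpace ℝ (Fin q), ‖z‖ ≤ ρstar →
      (∃ y ∈ (affineSpan ℝ Y : Set (EuclideanSpace ℝ (Fin n))), z = A *ᵥ y - b) →
      ∃ y ∈ Metric.closedBall y₀ r ∩ (affineSpan ℝ Y : Set (EuclideanSpace ℝ (Fin n))),
        z = A *ᵥ y - b :=
  stmt_4_general Y y₀ hy₀ A b hAy₀ r hr ρ hρ ρstar hρstar
end

section
/- Let X be a compact set, f : X → ℝ Lipschitz continuous, and (f^k)_{k∈ℕ} a sequence of L-Lipschitz functions on X satisfying f^k(x) ≤ f^{k+1}(x) ≤ f(x) for all x ∈ X and k ∈ ℕ. Let (x^k)_{k∈ℕ} be a sequence in X and S ≥ 0. If limsup_{k→∞} (f(x^k) − f^k(x^k)) ≤ S, then limsup_{k→∞} (f(x^k) − f^{k−1}(x^k)) ≤ S. -/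
open Filter

/-- Lemma 4.1: transfer of a limsup bound from `f - fᵏ` to `f - fᵏ⁻¹` for a
monotone sequence of equi-Lipschitz functions on a compact set. -/
theorem stmt_5 {α : Type*} [MetricSpace α]
    (X : Set α) (hX : IsCompact X)
    (f : α → ℝ) (K : NNReal) (hf : LipschitzOnWith K f X)
    (L : NNReal) (fk : ℕ → α → ℝ)
    (hfkLip : ∀ k, LipschitzOnWith L (fk k) X)
    (hmono : ∀ k, ∀ x ∈ X, fk k x ≤ fk (k + 1) x)
    (hle : ∀ k, ∀ x ∈ X, fk k x ≤ f x)
    (x : ℕ → α) (hx : ∀ k, x k ∈ X)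
    (S : ℝ) (hS : 0 ≤ S)
    (h : limsup (fun k => f (x k) - fk k (x k)) atTop ≤ S) :
    limsup (fun k => f (x k) - fk (k - 1) (x k)) atTop ≤ S := by
  -- monotonicity of (fk k) in k
  have hmono' : ∀ m n, m ≤ n → ∀ y ∈ X, fk m y ≤ fk n y := by
    intro m n hmn
    induction n, hmn using Nat.le_induction with
    | base => intro y hy; exact le_rfl
    | succ n hmn ih => intro y hy; exact (ih y hy).trans (hmono n y hy)
  -- upper bound for the sequence f(xk) - fk k (xk)
  obtain ⟨a, haX, hamax'⟩ := hX.exists_isMaxOn ⟨x 0, hx 0⟩ hf.continuousOn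
  obtain ⟨b, hbX, hbmin'⟩ := hX.exists_isMinOn ⟨x 0, hx 0⟩ (hfkLip 0).continuousOn
  have hamax : ∀ y ∈ X, f y ≤ f a := isMaxOn_iff.1 hamax'
  have hbmin : ∀ y ∈ X, fk 0 b ≤ fk 0 y := isMinOn_iff.1 hbmin'
  have hub : ∀ k, f (x k) - fk k (x k) ≤ f a - fk 0 b := by
    intro k
    have h1 : f (x k) ≤ f a := hamax _ (hx k)
    have h2 : fk 0 b ≤ fk k (x k) :=
      (hbmin _ (hx k)).trans (hmono' 0 k (Nat.zero_le k) _ (hx k))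
    linarith
  have hbdd : IsBoundedUnder (· ≤ ·) atTop (fun k => f (x k) - fk k (x k)) :=
    isBoundedUnder_of ⟨f a - fk 0 b, hub⟩
  have key : ∀ ε > (0:ℝ), ∀ᶠ k in atTop, f (x k) - fk (k - 1) (x k) ≤ S + ε := by
    intro ε hε
    by_contra hcon
    rw [Filter.not_eventually] at hcon
    have hfreq : ∃ᶠ k in atTop, S + ε < f (x k) - fk (k - 1) (x k) :=
      hcon.mono fun k hk => lt_of_not_ge hk
    obtain ⟨φ, hφ, hφ2⟩ := Filter.extraction_of_frequently_atTop hfreq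
    obtain ⟨xbar, hxbarX, ψ, hψ, hconv⟩ := hX.tendsto_subseq (fun n => hx (φ n))
    set σ : ℕ → ℕ := φ ∘ ψ with hσdef
    have hσ : StrictMono σ := hφ.comp hψ
    have hconv' : Tendsto (fun n => x (σ n)) atTop (nhds xbar) := hconv
    have hconv'' : Tendsto (fun n => x (σ (n + 1))) atTop (nhds xbar) :=
      hconv'.comp (tendsto_add_atTop_nat 1)
    have hdist : Tendsto (fun n => dist (x (σ (n + 1))) (x (σ n))) atTop (nhds 0) := by
      have := hconv''.dist hconv'
      simpa using this
    have hev1 : ∀ᶠ k in atTop, f (x k) - fk k (x k) < S + ε / 2 :=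
      eventually_lt_of_limsup_lt (by linarith) hbdd
    set δ : ℝ := ε / (2 * ((K : ℝ) + (L : ℝ) + 1)) with hδdef
    have hKL : (0:ℝ) < (K : ℝ) + (L : ℝ) + 1 := by positivity
    have hδ : 0 < δ := by positivity
    have hev2 : ∀ᶠ n in atTop, dist (x (σ (n + 1))) (x (σ n)) < δ :=
      hdist.eventually (gt_mem_nhds hδ)
    obtain ⟨N₁, hN₁⟩ := eventually_atTop.1 hev1
    obtain ⟨N₂, hN₂⟩ := eventually_atTop.1 hev2
    set n := max N₁ N₂ with hn
    have hσn : N₁ ≤ σ n := le_trans (le_max_left _ _) (hσ.le_apply)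
    have hA : f (x (σ n)) - fk (σ n) (x (σ n)) < S + ε / 2 := hN₁ _ hσn
    have hB : dist (x (σ (n + 1))) (x (σ n)) < δ := hN₂ _ (le_max_right _ _)
    -- Lipschitz estimates
    set d : ℝ := dist (x (σ (n + 1))) (x (σ n)) with hddef
    have hd0 : 0 ≤ d := dist_nonneg
    have hLf : f (x (σ (n + 1))) - f (x (σ n)) ≤ (K : ℝ) * d := by
      have := hf.dist_le_mul _ (hx (σ (n + 1))) _ (hx (σ n))
      calc f (x (σ (n + 1))) - f (x (σ n)) ≤ |f (x (σ (n + 1))) - f (x (σ n))| := le_abs_self _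
        _ ≤ (K : ℝ) * d := by rwa [Real.dist_eq] at this
    have hLfk : fk (σ n) (x (σ n)) - fk (σ n) (x (σ (n + 1))) ≤ (L : ℝ) * d := by
      have := (hfkLip (σ n)).dist_le_mul _ (hx (σ n)) _ (hx (σ (n + 1))) 
      calc fk (σ n) (x (σ n)) - fk (σ n) (x (σ (n + 1)))
          ≤ |fk (σ n) (x (σ n)) - fk (σ n) (x (σ (n + 1)))| := le_abs_self _
        _ ≤ (L : ℝ) * dist (x (σ n)) (x (σ (n + 1))) := by rwa [Real.dist_eq] at this
        _ = (L : ℝ) * d := by rw [dist_comm]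
    -- monotonicity step
    have hstep : σ n ≤ σ (n + 1) - 1 := Nat.le_sub_one_of_lt (hσ (Nat.lt_succ_self n))
    have hmstep : fk (σ n) (x (σ (n + 1))) ≤ fk (σ (n + 1) - 1) (x (σ (n + 1))) :=
      hmono' _ _ hstep _ (hx (σ (n + 1)))
    have hKLd : ((K : ℝ) + (L : ℝ)) * d ≤ ε / 2 := by
      have h1 : ((K : ℝ) + (L : ℝ)) * d ≤ ((K : ℝ) + (L : ℝ) + 1) * δ := by
        apply mul_le_mul (by linarith) (le_of_lt hB) hd0 (by linarith)
      have h2 : ((K : ℝ) + (L : ℝ) + 1) * δ = ε / 2 := by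
        rw [hδdef]; field_simp
      linarith
    have hchain : f (x (σ (n + 1))) - fk (σ (n + 1) - 1) (x (σ (n + 1))) ≤ S + ε := by
      have : f (x (σ (n + 1))) - fk (σ (n + 1) - 1) (x (σ (n + 1)))
          ≤ f (x (σ (n + 1))) - fk (σ n) (x (σ (n + 1))) := by linarith
      have expand : f (x (σ (n + 1))) - fk (σ n) (x (σ (n + 1)))
          = (f (x (σ n)) - fk (σ n) (x (σ n)))
            + (f (x (σ (n + 1))) - f (x (σ n)))
            + (fk (σ n) (x (σ n)) - fk (σ n) (x (σ (n + 1)))) := by ring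
      nlinarith [hLf, hLfk, hA, hKLd]
    exact absurd (hφ2 (ψ (n + 1))) (not_lt.2 hchain)
  -- conclude
  have hnonneg : ∀ k, (0:ℝ) ≤ f (x k) - fk (k - 1) (x k) := fun k =>
    sub_nonneg.2 (hle _ _ (hx k))
  have hcb : IsCoboundedUnder (· ≤ ·) atTop (fun k => f (x k) - fk (k - 1) (x k)) :=
    isCoboundedUnder_le_of_le atTop hnonneg
  refine le_of_forall_pos_le_add fun ε hε => ?_
  exact limsup_le_of_le hcb (key ε hε)
end

section
/- Let ε > 0. Suppose: (1) the sets X_t ⊆ ℝ^n are nonempty, convex, and compact for t−1 and t; (2) each component g_{t,i}(·,·,ξ) is convex on X_t × X_{t−1}^ε, where X_{t−1}^ε is the ε-fattening of X_{t−1}; (3) for every x_{t−1} ∈ X_{t−1}^ε the set {x_t ∈ ri(X_t) : A x_t + B x_{t−1} = b, g_t(x_t, x_{t−1}, ξ) ≤ 0} is nonempty; and (4) there exists (x̄_t, x̄_{t−1}) ∈ ri(X_t) × X_{t−1} with A x̄_t + B x̄_{t−1} = b and g_t(x̄_t, x̄_{t−1}, ξ) < 0. Then for every x_{t−1} ∈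 X_{t−1} there exists x̃ ∈ ri(X_t) with A x̃ + B x_{t−1} = b and g_t(x̃, x_{t−1}, ξ) < 0. -/
/-! Extend the segment from the Slater point x̄ through x a little beyond x, to a point x' of
the ε-fattening of X_{t−1}, and let y' be a feasible point for x' given by the recourse
assumption. Since x = a x̄ + c x' with a > 0, the point a ȳ + c y' is feasible for x: it lies in
ri X_t (which is convex), satisfies the linear constraint, and convexity of each g_i together with
the positive weight on the strictly feasible pair (ȳ, x̄) makes every constraint strict. -/

open Matrix Metric Set
open scoped Pointwise

protected theorem Convex.intrinsicInterior {V : Type*} [NormedAddCommGroup V] [NormedSpace ℝ V]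
    {s : Set V} (hs : Convex ℝ s) : Convex ℝ (intrinsicInterior ℝ s) := by
  rcases s.eq_empty_or_nonempty with rfl | ⟨p, hp⟩
  · simpa using convex_empty
  -- ri s is the affine image of an interior, through a parametrisation of aff s by its direction
  let p' : affineSpan ℝ s := ⟨p, subset_affineSpan _ _ hp⟩
  have : Nonempty (affineSpan ℝ s) := ⟨p'⟩
  let e := (AffineIsometryEquiv.constVSub ℝ p').symm
  let ψ := (affineSpan ℝ s).subtype.comp e.toAffineEquiv.toAffineMap
  have hψ : intrinsicInterior ℝ s = ψ '' interior (ψ ⁻¹' s) := by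
    rw [intrinsicInterior, AffineMap.coe_comp, image_comp, preimage_comp]
    congr 1
    exact ((e.toHomeomorph.image_interior _).trans
      (congrArg interior (e.toHomeomorph.image_preimage _))).symm
  rw [hψ]
  exact (hs.affine_preimage ψ).interior.affine_image ψ

theorem ConvexOn.combo_lt_of_lt_of_le {E : Type*} [AddCommGroup E] [Module ℝ E] {s : Set E}
    {f : E → ℝ} (hf : ConvexOn ℝ s f) {u v : E} (hu : u ∈ s) (hv : v ∈ s) {a c r : ℝ}
    (ha : 0 < a) (hc : 0 ≤ c) (hac : a + c = 1) (hfu : f u < r) (hfv : f v ≤ r) :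
    f (a • u + c • v) < r := by
  have hu' : a * f u < a * r := mul_lt_mul_of_pos_left hfu ha
  have hv' : c * f v ≤ c * r := mul_le_mul_of_nonneg_left hfv hc
  calc f (a • u + c • v) ≤ a * f u + c * f v := hf.2 hu hv ha.le hc hac
    _ < (a + c) * r := by linarith
    _ = r := by rw [hac, one_mul]

theorem Matrix.mulVec_combo_add_mulVec_combo {m k l R : Type*} [Fintype k] [Fintype l]
    [CommSemiring R] (A : Matrix m k R) (B : Matrix m l R) {b : m → R} {u₁ u₂ : k → R}
    {v₁ v₂ : l → R} (h₁ : A *ᵥ u₁ + B *ᵥ v₁ = b) (h₂ : A *ᵥ u₂ + B *ᵥ v₂ = b) {a c : R}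
    (hac : a + c = 1) : A *ᵥ (a • u₁ + c • u₂) + B *ᵥ (a • v₁ + c • v₂) = b := by
  calc A *ᵥ (a • u₁ + c • u₂) + B *ᵥ (a • v₁ + c • v₂)
      = a • (A *ᵥ u₁ + B *ᵥ v₁) + c • (A *ᵥ u₂ + B *ᵥ v₂) := by
        simp only [mulVec_add, mulVec_smul, smul_add]; abel
    _ = b := by rw [h₁, h₂, ← add_smul, hac, one_smul]

theorem exists_mem_closedBall_mem_openSegment {E : Type*} [SeminormedAddCommGroup E]
    [NormedSpace ℝ E] (x₀ x : E) {ε : ℝ} (hε : 0 < ε) :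
    ∃ x' ∈ closedBall x ε, x ∈ openSegment ℝ x₀ x' := by
  -- overshoot x along the ray from x₀ by a factor t with t‖x - x₀‖ ≤ ε
  set t := ε / (‖x - x₀‖ + ε)
  have ht : 0 < t := by positivity
  refine ⟨x + t • (x - x₀), ?_, t / (1 + t), 1 / (1 + t), by positivity, by positivity,
    by field_simp; ring, ?_⟩
  · rw [mem_closedBall, dist_eq_norm, add_sub_cancel_left, norm_smul,
      Real.norm_of_nonneg ht.le, div_mul_eq_mul_div, div_le_iff₀ (by positivity)]
    nlinarith [norm_nonneg (x - x₀)]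
  · match_scalars <;> field_simp
    ring

theorem closedBall_subset_add_closedBall_zero {E : Type*} [SeminormedAddCommGroup E]
    {s : Set E} {x : E} (hx : x ∈ s) (ε : ℝ) : closedBall x ε ⊆ s + closedBall 0 ε :=
  fun y hy => ⟨x, hx, y - x, by rwa [mem_closedBall_zero_iff, ← dist_eq_norm], add_sub_cancel _ _⟩

theorem stmt_6_general {n q p : ℕ} (ε : ℝ) (hε : 0 < ε)
    (Xt Xtm1 : Set (EuclideanSpace ℝ (Fin n)))
    (hXtconv : Convex ℝ Xt)
    (A B : Matrix (Fin q) (Fin n) ℝ) (b : Fin q → ℝ)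
    (g : EuclideanSpace ℝ (Fin n) → EuclideanSpace ℝ (Fin n) → Fin p → ℝ)
    -- each component of g is convex on X_t × X_{t−1}^ε:
    (hgconv : ∀ i, ConvexOn ℝ (Xt ×ˢ (Xtm1 + Metric.closedBall 0 ε))
      (fun z => g z.1 z.2 i))
    -- for every x in the ε-fattening of X_{t−1} the subproblem has a feasible
    -- point in the relative interior of X_t:
    (hrec : ∀ x : EuclideanSpace ℝ (Fin n), x ∈ Xtm1 + Metric.closedBall 0 ε →
      ∃ y ∈ intrinsicInterior ℝ Xt, A *ᵥ y + B *ᵥ x = b ∧ ∀ i, g y x i ≤ 0)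
    -- existence of a strictly feasible pair:
    (hslater : ∃ ybar ∈ intrinsicInterior ℝ Xt, ∃ xbar ∈ Xtm1,
      A *ᵥ ybar + B *ᵥ xbar = b ∧ ∀ i, g ybar xbar i < 0) :
    ∀ x ∈ Xtm1, ∃ y ∈ intrinsicInterior ℝ Xt,
      A *ᵥ y + B *ᵥ x = b ∧ ∀ i, g y x i < 0 := by
  obtain ⟨ybar, hybar, xbar, hxbar, hlinbar, hgbar⟩ := hslater
  intro x hx
  obtain ⟨x', hx', a, c, ha, hc, hac, hx_eq⟩ := exists_mem_closedBall_mem_openSegment xbar x hε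
  obtain ⟨y', hy', hlin', hg'⟩ := hrec x' (closedBall_subset_add_closedBall_zero hx ε hx')
  refine ⟨a • ybar + c • y', hXtconv.intrinsicInterior hybar hy' ha.le hc.le hac, ?_, fun i => ?_⟩
  · rw [← hx_eq]
    simpa only [WithLp.ofLp_add, WithLp.ofLp_smul] using
      Matrix.mulVec_combo_add_mulVec_combo A B hlinbar hlin' hac
  · have hmem_bar : (ybar, xbar) ∈ Xt ×ˢ (Xtm1 + closedBall 0 ε) :=
      ⟨intrinsicInterior_subset hybar,
        closedBall_subset_add_closedBall_zero hxbar ε (mem_closedBall_self hε.le)⟩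
    have hmem' : (y', x') ∈ Xt ×ˢ (Xtm1 + closedBall 0 ε) :=
      ⟨intrinsicInterior_subset hy', closedBall_subset_add_closedBall_zero hx ε hx'⟩
    have := (hgconv i).combo_lt_of_lt_of_le hmem_bar hmem' ha hc.le hac (hgbar i) (hg' i)
    rwa [Prod.smul_mk, Prod.smul_mk, Prod.mk_add_mk, hx_eq] at this

/-- Slater-type constraint qualification for the backward-pass subproblems
(Lemma 5.1): under convexity of the constraints on the ε-fattened set and
the recourse/Slater assumptions, every x_{t−1} ∈ X_{t−1} admits a strictly
feasible point x̃ ∈ ri(X_t). -/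
theorem stmt_6 {n q p : ℕ} (ε : ℝ) (hε : 0 < ε)
    (Xt Xtm1 : Set (EuclideanSpace ℝ (Fin n)))
    (hXt : Xt.Nonempty) (hXtconv : Convex ℝ Xt) (hXtcomp : IsCompact Xt)
    (hXtm1 : Xtm1.Nonempty) (hXtm1conv : Convex ℝ Xtm1) (hXtm1comp : IsCompact Xtm1)
    (A B : Matrix (Fin q) (Fin n) ℝ) (b : Fin q → ℝ)
    (g : EuclideanSpace ℝ (Fin n) → EuclideanSpace ℝ (Fin n) → Fin p → ℝ)
    -- each component of g is convex on X_t × X_{t−1}^ε: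
    (hgconv : ∀ i, ConvexOn ℝ (Xt ×ˢ (Xtm1 + Metric.closedBall 0 ε))
      (fun z => g z.1 z.2 i))
    -- for every x in the ε-fattening of X_{t−1} the subproblem has a feasible
    -- point in the relative interior of X_t:
    (hrec : ∀ x : EuclideanSpace ℝ (Fin n), x ∈ Xtm1 + Metric.closedBall 0 ε →
      ∃ y ∈ intrinsicInterior ℝ Xt, A *ᵥ y + B *ᵥ x = b ∧ ∀ i, g y x i ≤ 0)
    -- existence of a strictly feasible pair:
    (hslater : ∃ ybar ∈ intrinsicInterior ℝ Xt, ∃ xbar ∈ Xtm1,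
      A *ᵥ ybar + B *ᵥ xbar = b ∧ ∀ i, g ybar xbar i < 0) :
    ∀ x ∈ Xtm1, ∃ y ∈ intrinsicInterior ℝ Xt,
      A *ᵥ y + B *ᵥ x = b ∧ ∀ i, g y x i < 0 :=
  stmt_6_general ε hε Xt Xtm1 hXtconv A B b g hgconv hrec hslater
end

section
/- Let Y ⊂ ℝ^n and X ⊂ ℝ^m be nonempty compact convex sets, f ∈ C¹(Y×X) convex on Y×X, g ∈ C¹(Y×X) with components g_i convex on Y × X^ε for some ε > 0, and (Q^k) a sequence of convex L-Lipschitz functions on Y with Q̲ ≤ Q^k ≤ Q̄ for continuous Q̲, Q̄. Assume the uniform Slater condition: there exist r, κ > 0 such that for every x ∈ X there exists y ∈ Y with B(y, r) ∩ Aff(Y) ⊆ Y, Ay + Bx = b, and g(y, x) ≤ −κ𝟙. Let (x^k) ⊂ X, ε^k ≥ 0 with ε^k → 0, y^k an ε^k-optimal feasible solution to inf{f(y, x^k) + Q^k(y) : y ∈ Y, Ay + Bx^k = b, g(y, x^k) ≤ 0}, and (λ^k, μ^k) an ε^k-optimal solution to the associated dual problem. Define η^k as the optimal value of max_{y∈Y}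 ⟨∇_y f(y^k, x^k) + A^T λ^k + Σ_i μ^k(i) ∇_y g_i(y^k, x^k), y^k − y⟩ + Q^k(y^k) − Q^k(y). Then η^k → 0 as k → ∞. -/
/-!
Let `φ_k` be the smooth part `f(·, x^k) + ⟨λ^k, A · + B x^k - b⟩ + ⟨μ^k, g(·, x^k)⟩` of the
Lagrangian, so that `η^k` is the supremum over `y ∈ Y` of
`ℓ_k(y) = ⟨∇φ_k(y^k), y^k - y⟩ + Q^k(y^k) - Q^k(y)`.
Primal and dual `ε^k`-optimality give `(φ_k + Q^k)(y^k) - (φ_k + Q^k)(z) ≤ 2ε^k` for all `z ∈ Y`.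
Taking `z = y^k + t (y - y^k)` and using the gradient inequality of `φ_k` at `z` and the convexity
of `Q^k`, one gets `t ℓ_k(y) ≤ 2ε^k + t ‖y^k - y‖ ‖∇φ_k(y^k) - ∇φ_k(z)‖`.
The Slater condition bounds `∑ μ^k` uniformly in `k`, so the gradients `∇φ_k` are equicontinuous
on the compact set `Y` (the affine term has constant gradient): choosing `t` small and then `k`
large makes `η^k` as small as we like.
-/

open Matrix Filter
open scoped RealInnerProductSpace Pointwise

theorem ConvexOn.le_sub_of_hasFDerivAt {E : Type*} [NormedAddCommGroup E] [NormedSpace ℝ E]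
    {S : Set E} {φ : E → ℝ} {φ' : E →L[ℝ] ℝ} {a y : E} (hφ : ConvexOn ℝ S φ)
    (hd : HasFDerivAt φ φ' a) (ha : a ∈ S) (hy : y ∈ S) :
    φ' (y - a) ≤ φ y - φ a := by
  set ℓ : ℝ →ᵃ[ℝ] E := AffineMap.lineMap a y
  have hline : ConvexOn ℝ (ℓ ⁻¹' S) (φ ∘ ℓ) := hφ.comp_affineMap ℓ
  have hderiv : HasDerivAt (φ ∘ ℓ) (φ' (y - a)) 0 :=
    hd.comp_hasDerivAt_of_eq 0 AffineMap.hasDerivAt_lineMap (by simp [ℓ])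
  simpa [slope_def_field, ℓ] using
    hline.le_slope_of_hasDerivAt (x := 0) (y := 1) (by simpa [ℓ] using ha)
      (by simpa [ℓ] using hy) one_pos hderiv

theorem ConvexOn.inner_gradient_le_sub {E : Type*} [NormedAddCommGroup E] [InnerProductSpace ℝ E]
    [CompleteSpace E] {S : Set E} {φ : E → ℝ} {a y : E} (hφ : ConvexOn ℝ S φ)
    (hd : DifferentiableAt ℝ φ a) (ha : a ∈ S) (hy : y ∈ S) :
    ⟪gradient φ a, y - a⟫ ≤ φ y - φ a :=
  hφ.le_sub_of_hasFDerivAt hd.hasGradientAt.hasFDerivAt ha hy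

theorem ConvexOn.comp_prodMk_left {E F : Type*} [AddCommGroup E] [Module ℝ E]
    [AddCommGroup F] [Module ℝ F] {S : Set E} {T : Set F} {φ : E × F → ℝ}
    (hφ : ConvexOn ℝ (S ×ˢ T) φ) (hS : Convex ℝ S) {x : F} (hx : x ∈ T) :
    ConvexOn ℝ S (fun y => φ (y, x)) := by
  refine ⟨hS, fun u hu w hw s t hs ht hst => ?_⟩
  have h := hφ.2 (Set.mk_mem_prod hu hx) (Set.mk_mem_prod hw hx) hs ht hst
  rwa [Prod.smul_mk, Prod.smul_mk, Prod.mk_add_mk, ← add_smul, hst, one_smul] at h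

theorem ContDiff.differentiable_comp_prodMk_left {E G : Type*} [NormedAddCommGroup E]
    [NormedSpace ℝ E] [NormedAddCommGroup G] [NormedSpace ℝ G] {F : E × G → ℝ}
    (hF : ContDiff ℝ 1 F) (x : G) : Differentiable ℝ fun y => F (y, x) :=
  (hF.differentiable one_ne_zero).comp (differentiable_id.prodMk (differentiable_const x))

theorem ContDiff.continuous_gradient_comp_prodMk_left {E G : Type*} [NormedAddCommGroup E]
    [InnerProductSpace ℝ E] [CompleteSpace E] [NormedAddCommGroup G] [NormedSpace ℝ G]
    {F : E × G → ℝ} (hF : ContDiff ℝ 1 F) :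
    Continuous fun w : E × G => gradient (fun y => F (y, w.2)) w.1 := by
  have hpartial (w : E × G) : gradient (fun y => F (y, w.2)) w.1 =
      (InnerProductSpace.toDual ℝ E).symm ((fderiv ℝ F w).comp (ContinuousLinearMap.inl ℝ E G)) :=
    (((hF.differentiable one_ne_zero w).hasFDerivAt).comp w.1
      (hasFDerivAt_prodMk_left w.1 w.2)).hasGradientAt.gradient
  exact ((InnerProductSpace.toDual ℝ E).symm.continuous.comp
    ((hF.continuous_fderiv one_ne_zero).clm_comp continuous_const)).congr fun w => (hpartial w).symm

theorem IsCompact.exists_forall_dist_lineMap_lt {E F γ : Type*} [NormedAddCommGroup E]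
    [NormedSpace ℝ E] [PseudoMetricSpace F] [PseudoMetricSpace γ] {K : Set E} {T : Set F}
    {Φ : E × F → γ} (hK : IsCompact K) (hKconv : Convex ℝ K) (hT : IsCompact T)
    (hΦ : ContinuousOn Φ (K ×ˢ T)) {θ : ℝ} (hθ : 0 < θ) :
    ∃ t : ℝ, 0 < t ∧ t ≤ 1 ∧ ∀ x ∈ T, ∀ a ∈ K, ∀ y ∈ K,
      dist (Φ (a, x)) (Φ (a + t • (y - a), x)) < θ := by
  obtain ⟨δ, hδ, hΦδ⟩ := Metric.uniformContinuousOn_iff.1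
    ((hK.prod hT).uniformContinuousOn_of_continuous hΦ) θ hθ
  set D := Metric.diam K
  have hD : 0 ≤ D := Metric.diam_nonneg
  set t := min 1 (δ / (D + 1))
  have ht0 : 0 < t := by positivity
  refine ⟨t, ht0, min_le_left _ _, fun x hx a ha y hy => ?_⟩
  refine hΦδ _ ⟨ha, hx⟩ _ ⟨hKconv.add_smul_sub_mem ha hy ⟨ht0.le, min_le_left _ _⟩, hx⟩ ?_
  calc dist (a, x) (a + t • (y - a), x) = t * dist y a := by
        rw [Prod.dist_eq, dist_self, dist_comm, dist_eq_norm _ a, add_sub_cancel_left, norm_smul,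
          Real.norm_of_nonneg ht0.le, ← dist_eq_norm, max_eq_left (by positivity)]
    _ ≤ δ / (D + 1) * D :=
        mul_le_mul (min_le_right _ _) (Metric.dist_le_diam_of_mem hK.isBounded hy ha)
          dist_nonneg (by positivity)
    _ < δ := by
        rw [div_mul_eq_mul_div, div_lt_iff₀ (by positivity)]
        nlinarith

theorem IsCompact.exists_forall_abs_add_le {α β ι : Type*} [TopologicalSpace α]
    [TopologicalSpace β] {Y : Set α} {X : Set β} (hY : IsCompact Y) (hX : IsCompact X)
    {f : α → β → ℝ} (hf : ContinuousOn (fun z : α × β => f z.1 z.2) (Y ×ˢ X))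
    {Q : ι → α → ℝ} {Qlow Qup : α → ℝ} (hQlow : ContinuousOn Qlow Y) (hQup : ContinuousOn Qup Y)
    (hQbdd : ∀ k, ∀ y ∈ Y, Qlow y ≤ Q k y ∧ Q k y ≤ Qup y) :
    ∃ C, ∀ x ∈ X, ∀ k, ∀ y ∈ Y, |f y x + Q k y| ≤ C := by
  obtain ⟨Cf, hCf⟩ := (hY.prod hX).exists_bound_of_continuousOn hf
  obtain ⟨Cl, hCl⟩ := hY.exists_bound_of_continuousOn hQlow
  obtain ⟨Cu, hCu⟩ := hY.exists_bound_of_continuousOn hQup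
  refine ⟨Cf + Cl + Cu, fun x hx k y hy => abs_le.2 ?_⟩
  have hf' := abs_le.1 (hCf (y, x) ⟨hy, hx⟩)
  have hl := abs_le.1 (hCl y hy)
  have hu := abs_le.1 (hCu y hy)
  have hCl0 := (norm_nonneg _).trans (hCl y hy)
  have hCu0 := (norm_nonneg _).trans (hCu y hy)
  constructor <;> linarith [hQbdd k y hy]

theorem tendsto_zero_of_forall_le_div_add {ι : Type*} {l : Filter ι} {η ε : ι → ℝ} {C : ℝ}
    (hη0 : ∀ k, 0 ≤ η k) (hε : Tendsto ε l (nhds 0))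
    (h : ∀ θ > 0, ∃ t > 0, ∀ k, η k ≤ ε k / t + C * θ) : Tendsto η l (nhds 0) := by
  rw [Metric.tendsto_nhds]
  intro δ hδ
  obtain ⟨t, ht, hη⟩ := h (δ / (2 * (|C| + 1))) (by positivity)
  have hCθ : C * (δ / (2 * (|C| + 1))) < δ / 2 := by
    rw [← mul_div_assoc, div_lt_div_iff₀ (by positivity) two_pos]
    nlinarith [le_abs_self C]
  have hεt : Tendsto (fun k => ε k / t) l (nhds 0) := by simpa using hε.div_const t
  filter_upwards [hεt.eventually (eventually_lt_nhds (half_pos hδ))] with k hk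
  rw [Real.dist_0_eq_abs, abs_of_nonneg (hη0 k)]
  linarith [hη k]

theorem ConvexOn.mul_linearization_le {E : Type*} [NormedAddCommGroup E] [InnerProductSpace ℝ E]
    {S : Set E} {φ ψ : E → ℝ} {G : E → E} (hψ : ConvexOn ℝ S ψ)
    (hG : ∀ z ∈ S, ∀ w ∈ S, ⟪G z, w - z⟫ ≤ φ w - φ z) {a y : E} (ha : a ∈ S) (hy : y ∈ S)
    {t : ℝ} (ht0 : 0 ≤ t) (ht1 : t ≤ 1) :
    t * (⟪G a, a - y⟫ + ψ a - ψ y) ≤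
      (φ a + ψ a) - (φ (a + t • (y - a)) + ψ (a + t • (y - a))) +
        t * (‖a - y‖ * ‖G a - G (a + t • (y - a))‖) := by
  set z := a + t • (y - a)
  have hz : z ∈ S := hψ.1.add_smul_sub_mem ha hy ⟨ht0, ht1⟩
  have haz : a - z = t • (a - y) := by simp only [z, smul_sub]; abel
  have hsub : ⟪G z, a - z⟫ ≤ φ a - φ z := hG z hz a ha
  have hdiff : ⟪G a - G z, a - z⟫ ≤ t * (‖a - y‖ * ‖G a - G z‖) := by
    calc ⟪G a - G z, a - z⟫ ≤ ‖G a - G z‖ * ‖a - z‖ := real_inner_le_norm _ _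
      _ = t * (‖a - y‖ * ‖G a - G z‖) := by
        rw [haz, norm_smul, Real.norm_of_nonneg ht0]; ring
  have hψz : ψ z ≤ (1 - t) * ψ a + t * ψ y := by
    have hz' : z = (1 - t) • a + t • y := by simp only [z, sub_smul, one_smul, smul_sub]; abel
    rw [hz']
    exact hψ.2 ha hy (by linarith) ht0 (by ring)
  have hinner : t * ⟪G a, a - y⟫ = ⟪G z, a - z⟫ + ⟪G a - G z, a - z⟫ := by
    rw [← inner_add_left, add_sub_cancel, haz, real_inner_smul_right]
  linarith

section Lagrangian

variable {n q p : ℕ} {Y : Set (EuclideanSpace ℝ (Fin n))} {A : Matrix (Fin q) (Fin n) ℝ}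
  {c b : Fin q → ℝ} {f₀ Q : EuclideanSpace ℝ (Fin n) → ℝ}
  {g₀ : EuclideanSpace ℝ (Fin n) → Fin p → ℝ} {lam : EuclideanSpace ℝ (Fin q)} {mu : Fin p → ℝ}
  {a : EuclideanSpace ℝ (Fin n)} {v ε : ℝ}

theorem sum_le_of_slater {κ C : ℝ} (hκ : 0 < κ) {s : EuclideanSpace ℝ (Fin n)} (hs : s ∈ Y)
    (hseq : A *ᵥ s + c = b) (hsg : ∀ i, g₀ s i ≤ -κ) (hmu : 0 ≤ mu) (ha : a ∈ Y)
    (hC : ∀ y ∈ Y, |f₀ y + Q y| ≤ C) (haopt : f₀ a + Q a ≤ v + ε)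
    (hdual : ∀ y ∈ Y, f₀ y + Q y + lam ⬝ᵥ (A *ᵥ y + c - b) + mu ⬝ᵥ g₀ y ≥ v - ε) :
    ∑ i, mu i ≤ (2 * C + 2 * ε) / κ := by
  have hmug : mu ⬝ᵥ g₀ s ≤ -(κ * ∑ i, mu i) := by
    rw [Finset.mul_sum, ← Finset.sum_neg_distrib]
    exact Finset.sum_le_sum fun i _ => by linarith [mul_le_mul_of_nonneg_left (hsg i) (hmu i)]
  have hdual_s := hdual s hs
  rw [hseq, sub_self, dotProduct_zero] at hdual_s
  rw [le_div_iff₀' hκ]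
  linarith [abs_le.1 (hC s hs), abs_le.1 (hC a ha)]

theorem linearization_le (ha : a ∈ Y) {y : EuclideanSpace ℝ (Fin n)} (hy : y ∈ Y) {t : ℝ}
    (ht0 : 0 < t) (ht1 : t ≤ 1) (hf : ConvexOn ℝ Y f₀) (hg : ∀ i, ConvexOn ℝ Y fun y => g₀ y i)
    (hQ : ConvexOn ℝ Y Q) (hfd : Differentiable ℝ f₀)
    (hgd : ∀ i, Differentiable ℝ fun y => g₀ y i) (hmu : 0 ≤ mu)
    (hafeas : A *ᵥ a + c = b ∧ ∀ i, g₀ a i ≤ 0) (haopt : f₀ a + Q a ≤ v + ε)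
    (hdual : ∀ y ∈ Y, f₀ y + Q y + lam ⬝ᵥ (A *ᵥ y + c - b) + mu ⬝ᵥ g₀ y ≥ v - ε) :
    ⟪gradient f₀ a, a - y⟫ + (Aᵀ *ᵥ lam) ⬝ᵥ (a - y)
        + (∑ i, mu i * ⟪gradient (fun y' => g₀ y' i) a, a - y⟫) + Q a - Q y ≤
      2 * ε / t + ‖a - y‖ * (‖gradient f₀ a - gradient f₀ (a + t • (y - a))‖ +
        ∑ i, mu i * ‖gradient (fun y' => g₀ y' i) a -
          gradient (fun y' => g₀ y' i) (a + t • (y - a))‖) := by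
  -- `G = ∇φ`, but only the subgradient inequality of `G` for `φ` on `Y` is needed.
  set G : EuclideanSpace ℝ (Fin n) → EuclideanSpace ℝ (Fin n) := fun w =>
    gradient f₀ w + WithLp.toLp 2 (Aᵀ *ᵥ lam) + ∑ i, mu i • gradient (fun y' => g₀ y' i) w
  set φ : EuclideanSpace ℝ (Fin n) → ℝ := fun w => f₀ w + lam ⬝ᵥ (A *ᵥ w + c - b) + mu ⬝ᵥ g₀ w
  have hGinner (w u : EuclideanSpace ℝ (Fin n)) : ⟪G w, u⟫ = ⟪gradient f₀ w, u⟫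
      + (Aᵀ *ᵥ lam) ⬝ᵥ u + ∑ i, mu i * ⟪gradient (fun y' => g₀ y' i) w, u⟫ := by
    have hlin : ⟪WithLp.toLp 2 (Aᵀ *ᵥ lam), u⟫ = (Aᵀ *ᵥ lam) ⬝ᵥ u := by
      rw [EuclideanSpace.inner_eq_star_dotProduct, star_trivial, dotProduct_comm]
    simp only [G, inner_add_left, sum_inner, real_inner_smul_left, hlin]
  have hGsub : ∀ z ∈ Y, ∀ w ∈ Y, ⟪G z, w - z⟫ ≤ φ w - φ z := by
    intro z hz w hw
    have hlin : (Aᵀ *ᵥ lam) ⬝ᵥ (w - z).ofLp =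
        lam ⬝ᵥ (A *ᵥ w + c - b) - lam ⬝ᵥ (A *ᵥ z + c - b) := by
      rw [mulVec_transpose, ← dotProduct_mulVec, WithLp.ofLp_sub, mulVec_sub, ← dotProduct_sub]
      congr 1; abel
    have hsum : ∑ i, mu i * ⟪gradient (fun y' => g₀ y' i) z, w - z⟫ ≤
        mu ⬝ᵥ g₀ w - mu ⬝ᵥ g₀ z := by
      rw [← dotProduct_sub]
      exact Finset.sum_le_sum fun i _ => mul_le_mul_of_nonneg_left
        ((hg i).inner_gradient_le_sub (hgd i z) hz hw) (hmu i)
    rw [hGinner, hlin]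
    linarith [hf.inner_gradient_le_sub (hfd z) hz hw]
  set z := a + t • (y - a)
  have hz : z ∈ Y := hQ.1.add_smul_sub_mem ha hy ⟨ht0.le, ht1⟩
  have hφa : φ a + Q a ≤ v + ε := by
    have hmug : mu ⬝ᵥ g₀ a ≤ 0 :=
      Finset.sum_nonpos fun i _ => mul_nonpos_of_nonneg_of_nonpos (hmu i) (hafeas.2 i)
    simp only [φ, hafeas.1, sub_self, dotProduct_zero]
    linarith
  have hφz : v - ε ≤ φ z + Q z := by linarith [hdual z hz]
  have hGnorm : ‖G a - G z‖ ≤ ‖gradient f₀ a - gradient f₀ z‖ +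
      ∑ i, mu i * ‖gradient (fun y' => g₀ y' i) a - gradient (fun y' => g₀ y' i) z‖ := by
    have hGdiff : G a - G z = (gradient f₀ a - gradient f₀ z) +
        ∑ i, mu i • (gradient (fun y' => g₀ y' i) a - gradient (fun y' => g₀ y' i) z) := by
      simp only [G, smul_sub, Finset.sum_sub_distrib]; abel
    rw [hGdiff]
    refine (norm_add_le _ _).trans (add_le_add_right ((norm_sum_le _ _).trans ?_) _)
    simp only [norm_smul, Real.norm_of_nonneg (hmu _), le_refl]
  have hgap := hQ.mul_linearization_le hGsub ha hy ht0.le ht1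
  rw [hGinner, WithLp.ofLp_sub] at hgap
  refine le_of_mul_le_mul_left ?_ ht0
  rw [mul_add, mul_div_cancel₀ _ ht0.ne']
  nlinarith [mul_le_mul_of_nonneg_left hGnorm (norm_nonneg (a - y))]

theorem le_of_isLUB_linearization (hYb : Bornology.IsBounded Y) (ha : a ∈ Y) {t : ℝ} (ht0 : 0 < t)
    (ht1 : t ≤ 1) (hf : ConvexOn ℝ Y f₀) (hg : ∀ i, ConvexOn ℝ Y fun y => g₀ y i)
    (hQ : ConvexOn ℝ Y Q) (hfd : Differentiable ℝ f₀)
    (hgd : ∀ i, Differentiable ℝ fun y => g₀ y i) (hmu : 0 ≤ mu)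
    (hafeas : A *ᵥ a + c = b ∧ ∀ i, g₀ a i ≤ 0) (haopt : f₀ a + Q a ≤ v + ε)
    (hdual : ∀ y ∈ Y, f₀ y + Q y + lam ⬝ᵥ (A *ᵥ y + c - b) + mu ⬝ᵥ g₀ y ≥ v - ε)
    {M θ η : ℝ} (hM : ∑ i, mu i ≤ M)
    (hclose : ∀ y ∈ Y, dist (gradient f₀ a, fun i => gradient (fun y' => g₀ y' i) a)
      (gradient f₀ (a + t • (y - a)), fun i => gradient (fun y' => g₀ y' i) (a + t • (y - a))) < θ)
    (hη : IsLUB {c : ℝ | ∃ y ∈ Y,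
      c = ⟪gradient f₀ a, a - y⟫ + (Aᵀ *ᵥ lam) ⬝ᵥ (a - y)
        + (∑ i, mu i * ⟪gradient (fun y' => g₀ y' i) a, a - y⟫) + Q a - Q y} η) :
    η ≤ 2 * ε / t + Metric.diam Y * (1 + M) * θ := by
  refine hη.2 ?_
  rintro _ ⟨y, hy, rfl⟩
  set z := a + t • (y - a)
  have hθ := hclose y hy
  rw [Prod.dist_eq, max_lt_iff, dist_eq_norm] at hθ
  have hΔg (i : Fin p) : mu i * ‖gradient (fun y' => g₀ y' i) a -
      gradient (fun y' => g₀ y' i) z‖ ≤ mu i * θ := by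
    rw [← dist_eq_norm]
    exact mul_le_mul_of_nonneg_left ((dist_le_pi_dist _ _ i).trans hθ.2.le) (hmu i)
  have hΔ : ‖gradient f₀ a - gradient f₀ z‖ +
      ∑ i, mu i * ‖gradient (fun y' => g₀ y' i) a - gradient (fun y' => g₀ y' i) z‖ ≤
        (1 + M) * θ := by
    have := Finset.sum_le_sum fun i (_ : i ∈ Finset.univ) => hΔg i
    rw [← Finset.sum_mul] at this
    nlinarith [mul_le_mul_of_nonneg_right hM (dist_nonneg.trans_lt hθ.2).le]
  calc _ ≤ 2 * ε / t + ‖a - y‖ * (‖gradient f₀ a - gradient f₀ z‖ +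
        ∑ i, mu i * ‖gradient (fun y' => g₀ y' i) a - gradient (fun y' => g₀ y' i) z‖) :=
        linearization_le ha hy ht0 ht1 hf hg hQ hfd hgd hmu hafeas haopt hdual
    _ ≤ 2 * ε / t + Metric.diam Y * ((1 + M) * θ) := by
        gcongr
        · exact add_nonneg (norm_nonneg _)
            (Finset.sum_nonneg fun i _ => mul_nonneg (hmu i) (norm_nonneg _))
        · rw [← dist_eq_norm]; exact Metric.dist_le_diam_of_mem hYb ha hy
    _ = 2 * ε / t + Metric.diam Y * (1 + M) * θ := by ring

end Lagrangian

theorem stmt_7_general {n m q p : ℕ}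
    (Y : Set (EuclideanSpace ℝ (Fin n))) (hYcomp : IsCompact Y) (hYconv : Convex ℝ Y)
    (X : Set (EuclideanSpace ℝ (Fin m))) (hXcomp : IsCompact X)
    (A : Matrix (Fin q) (Fin n) ℝ) (B : Matrix (Fin q) (Fin m) ℝ) (b : Fin q → ℝ)
    (f : EuclideanSpace ℝ (Fin n) → EuclideanSpace ℝ (Fin m) → ℝ)
    (g : EuclideanSpace ℝ (Fin n) → EuclideanSpace ℝ (Fin m) → Fin p → ℝ)
    -- f ∈ C¹(Y×X) and convex on Y×X:
    (hfC1 : ContDiff ℝ 1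
      (fun z : EuclideanSpace ℝ (Fin n) × EuclideanSpace ℝ (Fin m) => f z.1 z.2))
    (hfconv : ConvexOn ℝ (Y ×ˢ X)
      (fun z : EuclideanSpace ℝ (Fin n) × EuclideanSpace ℝ (Fin m) => f z.1 z.2))
    -- g ∈ C¹(Y×X) with components convex on Y × X^ε for some ε > 0:
    (ε : ℝ) (hεpos : 0 < ε)
    (hgC1 : ∀ i, ContDiff ℝ 1
      (fun z : EuclideanSpace ℝ (Fin n) × EuclideanSpace ℝ (Fin m) => g z.1 z.2 i))
    (hgconv : ∀ i, ConvexOn ℝ (Y ×ˢ (X + Metric.closedBall 0 ε))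
      (fun z : EuclideanSpace ℝ (Fin n) × EuclideanSpace ℝ (Fin m) => g z.1 z.2 i))
    -- (Q^k): convex L-Lipschitz functions on Y with Q̲ ≤ Q^k ≤ Q̄:
    (Q : ℕ → EuclideanSpace ℝ (Fin n) → ℝ)
    (hQconv : ∀ k, ConvexOn ℝ Y (Q k))
    (Qlow Qup : EuclideanSpace ℝ (Fin n) → ℝ)
    (hQlow : ContinuousOn Qlow Y) (hQup : ContinuousOn Qup Y)
    (hQbdd : ∀ k, ∀ y ∈ Y, Qlow y ≤ Q k y ∧ Q k y ≤ Qup y)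
    -- uniform Slater condition (H):
    (r κ : ℝ) (hκ : 0 < κ)
    (hH : ∀ x ∈ X, ∃ y ∈ Y,
      Metric.closedBall y r ∩ (affineSpan ℝ Y : Set (EuclideanSpace ℝ (Fin n))) ⊆ Y ∧
      A *ᵥ y + B *ᵥ x = b ∧ ∀ i, g y x i ≤ -κ)
    -- sequences (x^k) ⊆ X and ε^k ≥ 0 with ε^k → 0:
    (x : ℕ → EuclideanSpace ℝ (Fin m)) (hx : ∀ k, x k ∈ X)
    (εk : ℕ → ℝ) (hεk0 : Tendsto εk atTop (nhds 0))
    -- v k is the optimal value of the primal problem at x^k: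
    (v : ℕ → ℝ)
    -- y^k is an ε^k-optimal feasible primal solution:
    (yk : ℕ → EuclideanSpace ℝ (Fin n)) (hykY : ∀ k, yk k ∈ Y)
    (hykfeas : ∀ k, A *ᵥ yk k + B *ᵥ x k = b ∧ ∀ i, g (yk k) (x k) i ≤ 0)
    (hykopt : ∀ k, f (yk k) (x k) + Q k (yk k) ≤ v k + εk k)
    -- (λ^k, μ^k) is an ε^k-optimal feasible dual solution:
    (lam : ℕ → EuclideanSpace ℝ (Fin q)) (mu : ℕ → Fin p → ℝ)
    (hmu : ∀ k, 0 ≤ mu k)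
    (hdualopt : ∀ k, ∀ y ∈ Y,
      f y (x k) + Q k y + lam k ⬝ᵥ (A *ᵥ y + B *ᵥ x k - b) + mu k ⬝ᵥ g y (x k)
        ≥ v k - εk k)
    -- η^k is the optimal value of the linearization problem:
    (η : ℕ → ℝ)
    (hη : ∀ k, IsLUB {c : ℝ | ∃ y ∈ Y,
      c = ⟪gradient (fun y' => f y' (x k)) (yk k), yk k - y⟫
            + (Aᵀ *ᵥ lam k) ⬝ᵥ (yk k - y)
            + (∑ i, mu k i * ⟪gradient (fun y' => g y' (x k) i) (yk k), yk k - y⟫)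
            + Q k (yk k) - Q k y} (η k)) :
    Tendsto η atTop (nhds 0) := by
  have hη0 (k : ℕ) : 0 ≤ η k := (hη k).1 ⟨yk k, hykY k, by simp⟩
  obtain ⟨C, hC⟩ := hYcomp.exists_forall_abs_add_le hXcomp hfC1.continuous.continuousOn
    hQlow hQup hQbdd
  obtain ⟨Cε, hCε⟩ := hεk0.bddAbove_range
  set M := (2 * C + 2 * Cε) / κ
  have hM (k : ℕ) : ∑ i, mu k i ≤ M := by
    obtain ⟨s, hs, -, hseq, hsg⟩ := hH (x k) (hx k)
    exact (sum_le_of_slater hκ hs hseq hsg (hmu k) (hykY k) (hC _ (hx k) k) (hykopt k)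
      (hdualopt k)).trans (div_le_div_of_nonneg_right (by linarith [hCε ⟨k, rfl⟩]) hκ.le)
  have hΦ : Continuous fun w : EuclideanSpace ℝ (Fin n) × EuclideanSpace ℝ (Fin m) =>
      (gradient (fun y => f y w.2) w.1, fun i => gradient (fun y => g y w.2 i) w.1) :=
    hfC1.continuous_gradient_comp_prodMk_left.prodMk
      (continuous_pi fun i => (hgC1 i).continuous_gradient_comp_prodMk_left)
  refine tendsto_zero_of_forall_le_div_add (C := Metric.diam Y * (1 + M)) hη0 hεk0 fun θ hθ => ?_
  obtain ⟨t, ht0, ht1, hclose⟩ :=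
    hYcomp.exists_forall_dist_lineMap_lt hYconv hXcomp hΦ.continuousOn hθ
  refine ⟨t / 2, half_pos ht0, fun k => ?_⟩
  have hxk : x k ∈ X + Metric.closedBall 0 ε := by
    simpa using Set.add_mem_add (hx k) (Metric.mem_closedBall_self (x := 0) hεpos.le)
  rw [div_div_eq_mul_div, mul_comm (εk k)]
  exact le_of_isLUB_linearization hYcomp.isBounded (hykY k) ht0 ht1
    (hfconv.comp_prodMk_left hYconv (hx k)) (fun i => (hgconv i).comp_prodMk_left hYconv hxk)
    (hQconv k) (hfC1.differentiable_comp_prodMk_left _)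
    (fun i => (hgC1 i).differentiable_comp_prodMk_left _) (hmu k) (hykfeas k) (hykopt k)
    (hdualopt k) (hM k) (fun y hy => hclose _ (hx k) _ (hykY k) _ hy) (hη k)

/-- Proposition 5.2: vanishing of the inexactness terms η^k when the
optimization errors ε^k vanish. -/
theorem stmt_7 {n m q p : ℕ}
    (Y : Set (EuclideanSpace ℝ (Fin n))) (hYne : Y.Nonempty)
    (hYcomp : IsCompact Y) (hYconv : Convex ℝ Y)
    (X : Set (EuclideanSpace ℝ (Fin m))) (hXne : X.Nonempty)
    (hXcomp : IsCompact X) (hXconv : Convex ℝ X)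
    (A : Matrix (Fin q) (Fin n) ℝ) (B : Matrix (Fin q) (Fin m) ℝ) (b : Fin q → ℝ)
    (f : EuclideanSpace ℝ (Fin n) → EuclideanSpace ℝ (Fin m) → ℝ)
    (g : EuclideanSpace ℝ (Fin n) → EuclideanSpace ℝ (Fin m) → Fin p → ℝ)
    -- f ∈ C¹(Y×X) and convex on Y×X:
    (hfC1 : ContDiff ℝ 1
      (fun z : EuclideanSpace ℝ (Fin n) × EuclideanSpace ℝ (Fin m) => f z.1 z.2))
    (hfconv : ConvexOn ℝ (Y ×ˢ X)
      (fun z : EuclideanSpace ℝ (Fin n) × EuclideanSpace ℝ (Fin m) => f z.1 z.2))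
    -- g ∈ C¹(Y×X) with components convex on Y × X^ε for some ε > 0:
    (ε : ℝ) (hεpos : 0 < ε)
    (hgC1 : ∀ i, ContDiff ℝ 1
      (fun z : EuclideanSpace ℝ (Fin n) × EuclideanSpace ℝ (Fin m) => g z.1 z.2 i))
    (hgconv : ∀ i, ConvexOn ℝ (Y ×ˢ (X + Metric.closedBall 0 ε))
      (fun z : EuclideanSpace ℝ (Fin n) × EuclideanSpace ℝ (Fin m) => g z.1 z.2 i))
    -- (Q^k): convex L-Lipschitz functions on Y with Q̲ ≤ Q^k ≤ Q̄:
    (L : NNReal) (Q : ℕ → EuclideanSpace ℝ (Fin n) → ℝ)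
    (hQconv : ∀ k, ConvexOn ℝ Y (Q k))
    (hQlip : ∀ k, LipschitzOnWith L (Q k) Y)
    (Qlow Qup : EuclideanSpace ℝ (Fin n) → ℝ)
    (hQlow : ContinuousOn Qlow Y) (hQup : ContinuousOn Qup Y)
    (hQbdd : ∀ k, ∀ y ∈ Y, Qlow y ≤ Q k y ∧ Q k y ≤ Qup y)
    -- uniform Slater condition (H):
    (r κ : ℝ) (hr : 0 < r) (hκ : 0 < κ)
    (hH : ∀ x ∈ X, ∃ y ∈ Y,
      Metric.closedBall y r ∩ (affineSpan ℝ Y : Set (EuclideanSpace ℝ (Fin n))) ⊆ Y ∧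
      A *ᵥ y + B *ᵥ x = b ∧ ∀ i, g y x i ≤ -κ)
    -- sequences (x^k) ⊆ X and ε^k ≥ 0 with ε^k → 0:
    (x : ℕ → EuclideanSpace ℝ (Fin m)) (hx : ∀ k, x k ∈ X)
    (εk : ℕ → ℝ) (hεk : ∀ k, 0 ≤ εk k) (hεk0 : Tendsto εk atTop (nhds 0))
    -- v k is the optimal value of the primal problem at x^k:
    (v : ℕ → ℝ)
    (hv : ∀ k, IsGLB {c : ℝ | ∃ y ∈ Y, A *ᵥ y + B *ᵥ x k = b ∧
      (∀ i, g y (x k) i ≤ 0) ∧ c = f y (x k) + Q k y} (v k))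
    -- y^k is an ε^k-optimal feasible primal solution:
    (yk : ℕ → EuclideanSpace ℝ (Fin n)) (hykY : ∀ k, yk k ∈ Y)
    (hykfeas : ∀ k, A *ᵥ yk k + B *ᵥ x k = b ∧ ∀ i, g (yk k) (x k) i ≤ 0)
    (hykopt : ∀ k, f (yk k) (x k) + Q k (yk k) ≤ v k + εk k)
    -- (λ^k, μ^k) is an ε^k-optimal feasible dual solution:
    (lam : ℕ → EuclideanSpace ℝ (Fin q)) (mu : ℕ → Fin p → ℝ)
    (hmu : ∀ k, 0 ≤ mu k)
    (hlamfeas : ∀ k, ∃ y ∈ (affineSpan ℝ Y : Set (EuclideanSpace ℝ (Fin n))),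
      lam k = (A *ᵥ y + B *ᵥ x k - b : Fin q → ℝ))
    (hdualopt : ∀ k, ∀ y ∈ Y,
      f y (x k) + Q k y + lam k ⬝ᵥ (A *ᵥ y + B *ᵥ x k - b) + mu k ⬝ᵥ g y (x k)
        ≥ v k - εk k)
    -- η^k is the optimal value of the linearization problem:
    (η : ℕ → ℝ)
    (hη : ∀ k, IsLUB {c : ℝ | ∃ y ∈ Y,
      c = ⟪gradient (fun y' => f y' (x k)) (yk k), yk k - y⟫
            + (Aᵀ *ᵥ lam k) ⬝ᵥ (yk k - y)
            + (∑ i, mu k i * ⟪gradient (fun y' => g y' (x k) i) (yk k), yk k - y⟫)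
            + Q k (yk k) - Q k y} (η k)) :
    Tendsto η atTop (nhds 0) :=
  stmt_7_general Y hYcomp hYconv X hXcomp A B b f g hfC1 hfconv ε hεpos hgC1 hgconv Q hQconv Qlow
    Qup hQlow hQup hQbdd r κ hκ hH x hx εk hεk0 v yk hykY hykfeas hykopt lam mu hmu hdualopt η hη
end

section
/- Let θ(λ,μ) = inf_{y∈Y} {f(y) + ⟨λ, Ay − b⟩ + ⟨μ, g(y)⟩} be the dual function of the convex problem min{f(y) : Ay = b, g(y) ≤ 0, y ∈ Y}, and let F = A·Aff(Y) − b. Then for every λ ∈ ℝ^q and μ ≥ 0, θ(λ, μ) = θ(Π_F(λ), μ), where Π_F(λ) is the orthogonal projection of λ onto the linear span of F. Consequently, if F^⊥ ≠ {0}, then for any ε-optimal dual solution (λ(ε), μ(ε)) and any λ' ∈ F^⊥, the point (λ(ε) + λ', μ(ε)) is also ε-optimal; in particular the set of ε-optimal dual solutions is unbounded. -/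
open Matrix

/-- The dual function value set at λ over y ∈ Y. -/
def stmt10LagrSet {n q p : ℕ} (Y : Set (EuclideanSpace ℝ (Fin n)))
    (A : Matrix (Fin q) (Fin n) ℝ) (b : Fin q → ℝ)
    (f : EuclideanSpace ℝ (Fin n) → ℝ) (g : EuclideanSpace ℝ (Fin n) → Fin p → ℝ)
    (lam : EuclideanSpace ℝ (Fin q)) (mu : Fin p → ℝ) : Set ℝ :=
  {v : ℝ | ∃ y ∈ Y, v = f y + lam ⬝ᵥ (A *ᵥ y - b) + mu ⬝ᵥ g y}

/-- The dual function θ(λ, μ) = inf_{y ∈ Y} {f(y) + ⟨λ, Ay − b⟩ + ⟨μ, g(y)⟩}. -/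
noncomputable def stmt10Theta {n q p : ℕ} (Y : Set (EuclideanSpace ℝ (Fin n)))
    (A : Matrix (Fin q) (Fin n) ℝ) (b : Fin q → ℝ)
    (f : EuclideanSpace ℝ (Fin n) → ℝ) (g : EuclideanSpace ℝ (Fin n) → Fin p → ℝ)
    (lam : EuclideanSpace ℝ (Fin q)) (mu : Fin p → ℝ) : ℝ :=
  sInf (stmt10LagrSet Y A b f g lam mu)

/-! For y ∈ Y ⊆ Aff(Y) the residual Ay − b lies in F, so every λ' ∈ Fᗮ satisfies
⟨λ', Ay − b⟩ = 0 and the Lagrangian, hence θ, is unchanged under λ ↦ λ + λ'. Taking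
λ' = λ − Π_F λ gives the projection identity; a nonzero direction of Fᗮ, scaled up, gives
ε-optimal multipliers of arbitrarily large norm. -/

section DualFunction

variable {n q p : ℕ} {Y : Set (EuclideanSpace ℝ (Fin n))} {A : Matrix (Fin q) (Fin n) ℝ}
  {b : Fin q → ℝ} (f : EuclideanSpace ℝ (Fin n) → ℝ) (g : EuclideanSpace ℝ (Fin n) → Fin p → ℝ)

theorem stmt10LagrSet_add_of_dotProduct_eq_zero {lam lam' : EuclideanSpace ℝ (Fin q)}
    (h : ∀ y ∈ Y, lam' ⬝ᵥ (A *ᵥ y - b) = 0) (mu : Fin p → ℝ) :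
    stmt10LagrSet Y A b f g (lam + lam') mu = stmt10LagrSet Y A b f g lam mu := by
  ext v
  refine exists_congr fun y => and_congr_right fun hy => ?_
  rw [WithLp.ofLp_add, add_dotProduct, h y hy, add_zero]

theorem stmt10Theta_add_of_dotProduct_eq_zero {lam lam' : EuclideanSpace ℝ (Fin q)}
    (h : ∀ y ∈ Y, lam' ⬝ᵥ (A *ᵥ y - b) = 0) (mu : Fin p → ℝ) :
    stmt10Theta Y A b f g (lam + lam') mu = stmt10Theta Y A b f g lam mu :=
  congrArg sInf (stmt10LagrSet_add_of_dotProduct_eq_zero f g h mu)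

end DualFunction

theorem dotProduct_eq_zero_of_mem_orthogonal_span {n q : ℕ} {Y : Set (EuclideanSpace ℝ (Fin n))}
    {A : Matrix (Fin q) (Fin n) ℝ} {b : Fin q → ℝ} {lam : EuclideanSpace ℝ (Fin q)}
    (hlam : lam ∈ (Submodule.span ℝ {z : EuclideanSpace ℝ (Fin q) |
        ∃ y ∈ (affineSpan ℝ Y : Set (EuclideanSpace ℝ (Fin n))), z = A *ᵥ y - b})ᗮ)
    {y : EuclideanSpace ℝ (Fin n)} (hy : y ∈ affineSpan ℝ Y) :
    lam ⬝ᵥ (A *ᵥ y - b) = 0 := by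
  have hmem := Submodule.subset_span (R := ℝ)
    (show WithLp.toLp 2 (A *ᵥ y - b) ∈ {z : EuclideanSpace ℝ (Fin q) |
      ∃ y ∈ (affineSpan ℝ Y : Set (EuclideanSpace ℝ (Fin n))), z = A *ᵥ y - b} from ⟨y, hy, rfl⟩)
  simpa [EuclideanSpace.inner_eq_star_dotProduct, dotProduct_comm] using hlam _ hmem

theorem Submodule.exists_le_norm_add_of_ne_bot {E : Type*} [NormedAddCommGroup E]
    [NormedSpace ℝ E] {K : Submodule ℝ E} (hK : K ≠ ⊥) (x : E) (R : ℝ) :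
    ∃ v ∈ K, R ≤ ‖x + v‖ := by
  have : Nontrivial K := Submodule.nontrivial_iff_ne_bot.mpr hK
  obtain ⟨v, hv⟩ := exists_norm_eq K (add_nonneg (abs_nonneg R) (norm_nonneg x))
  refine ⟨v, v.2, ?_⟩
  have htri := norm_sub_le (x + v) x
  rw [add_sub_cancel_left] at htri
  linarith [le_abs_self R, show ‖(v : E)‖ = ‖v‖ from rfl]

theorem stmt_10_general {n q p : ℕ}
    (Y : Set (EuclideanSpace ℝ (Fin n)))
    (A : Matrix (Fin q) (Fin n) ℝ) (b : Fin q → ℝ)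
    (f : EuclideanSpace ℝ (Fin n) → ℝ) (g : EuclideanSpace ℝ (Fin n) → Fin p → ℝ)
    -- F = span of {Ay − b : y ∈ Aff(Y)}:
    (F : Submodule ℝ (EuclideanSpace ℝ (Fin q)))
    (hF : F = Submodule.span ℝ
      {z : EuclideanSpace ℝ (Fin q) |
        ∃ y ∈ (affineSpan ℝ Y : Set (EuclideanSpace ℝ (Fin n))), z = A *ᵥ y - b}) :
    (∀ (lam : EuclideanSpace ℝ (Fin q)) (mu : Fin p → ℝ), 0 ≤ mu →
      stmt10Theta Y A b f g lam mu =
        stmt10Theta Y A b f g (Submodule.orthogonalProjectionOnto F lam : EuclideanSpace ℝ (Fin q)) mu) ∧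
    (Fᗮ ≠ ⊥ →
      ∀ (dstar ε : ℝ), 0 ≤ ε →
      (∀ (lam : EuclideanSpace ℝ (Fin q)) (mu : Fin p → ℝ), 0 ≤ mu →
        stmt10Theta Y A b f g lam mu ≤ dstar) →
      ∀ (lam : EuclideanSpace ℝ (Fin q)) (mu : Fin p → ℝ), 0 ≤ mu →
        stmt10Theta Y A b f g lam mu ≥ dstar - ε →
        (∀ lam' ∈ Fᗮ, stmt10Theta Y A b f g (lam + lam') mu ≥ dstar - ε) ∧
        (∀ R : ℝ, ∃ lam'' : EuclideanSpace ℝ (Fin q),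
          stmt10Theta Y A b f g lam'' mu ≥ dstar - ε ∧ R ≤ ‖lam''‖)) := by
  have hinv : ∀ lam, ∀ lam' ∈ Fᗮ, ∀ mu,
      stmt10Theta Y A b f g (lam + lam') mu = stmt10Theta Y A b f g lam mu :=
    fun lam lam' hlam' mu => stmt10Theta_add_of_dotProduct_eq_zero f g
      (fun y hy => dotProduct_eq_zero_of_mem_orthogonal_span (hF ▸ hlam')
        (subset_affineSpan ℝ Y hy)) mu
  refine ⟨fun lam mu _ => ?_, fun hFo dstar ε _ _ lam mu _ hlb => ⟨fun lam' hlam' => ?_, fun R => ?_⟩⟩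
  · have hproj := hinv (F.starProjection lam) _ (F.sub_starProjection_mem_orthogonal lam) mu
    rwa [add_sub_cancel] at hproj
  · rwa [hinv lam lam' hlam' mu]
  · obtain ⟨v, hv, hR⟩ := Fᗮ.exists_le_norm_add_of_ne_bot hFo lam R
    exact ⟨lam + v, by rwa [hinv lam v hv mu], hR⟩

/-- The dual function is invariant under orthogonal projection of λ onto the
span of F = A·Aff(Y) − b; consequently if F^⊥ ≠ {0} the set of ε-optimal dual
solutions is unbounded. -/
theorem stmt_10 {n q p : ℕ}
    (Y : Set (EuclideanSpace ℝ (Fin n))) (hYcl : IsClosed Y) (hYconv : Convex ℝ Y)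
    (A : Matrix (Fin q) (Fin n) ℝ) (b : Fin q → ℝ)
    (hb : ∃ y ∈ (affineSpan ℝ Y : Set (EuclideanSpace ℝ (Fin n))), A *ᵥ y = b)
    (f : EuclideanSpace ℝ (Fin n) → ℝ) (g : EuclideanSpace ℝ (Fin n) → Fin p → ℝ)
    (hfconv : ConvexOn ℝ Y f) (hgconv : ∀ i, ConvexOn ℝ Y (fun y => g y i))
    -- F = span of {Ay − b : y ∈ Aff(Y)}:
    (F : Submodule ℝ (EuclideanSpace ℝ (Fin q)))
    (hF : F = Submodule.span ℝ
      {z : EuclideanSpace ℝ (Fin q) |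
        ∃ y ∈ (affineSpan ℝ Y : Set (EuclideanSpace ℝ (Fin n))), z = A *ᵥ y - b}) :
    (∀ (lam : EuclideanSpace ℝ (Fin q)) (mu : Fin p → ℝ), 0 ≤ mu →
      stmt10Theta Y A b f g lam mu =
        stmt10Theta Y A b f g (Submodule.orthogonalProjectionOnto F lam : EuclideanSpace ℝ (Fin q)) mu) ∧
    (Fᗮ ≠ ⊥ →
      ∀ (dstar ε : ℝ), 0 ≤ ε →
      (∀ (lam : EuclideanSpace ℝ (Fin q)) (mu : Fin p → ℝ), 0 ≤ mu →
        stmt10Theta Y A b f g lam mu ≤ dstar) →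
      ∀ (lam : EuclideanSpace ℝ (Fin q)) (mu : Fin p → ℝ), 0 ≤ mu →
        stmt10Theta Y A b f g lam mu ≥ dstar - ε →
        (∀ lam' ∈ Fᗮ, stmt10Theta Y A b f g (lam + lam') mu ≥ dstar - ε) ∧
        (∀ R : ℝ, ∃ lam'' : EuclideanSpace ℝ (Fin q),
          stmt10Theta Y A b f g lam'' mu ≥ dstar - ε ∧ R ≤ ‖lam''‖)) :=
  stmt_10_general Y A b f g F hF
end
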